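/- arXiv:math/0701390 — 5 statements merged into one kernel-verified Lean document; each statement's English description precedes it below -/
import Mathlib

section
/- Let $X$ be a random variable taking values in $\{1,\dots,n\}$ with $p_i = \mathbf{P}(X=i)$, let $X_1,\dots,X_l$ be independent copies of $X$, and let $Z = \sum_{1\le i<j\le l} \mathbf{1}(X_i = X_j)$. Then $\mathrm{var}(Z) \le \mathbf{E}(Z)\left(1 + \frac{2\sqrt{n}}{l}\,\mathbf{E}(Z)\right)$. -/
open MeasureTheory ProbabilityTheory Finset



lemma bvb_marg {n l : ℕ} (p : Fin n → ℝ) (hp1 : ∑ i, p i = 1)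
    (S : Finset (Fin l)) (g : Fin l → Fin n) :
    ∑ f : Fin l → Fin n, (∏ k, p (f k)) * (∏ k ∈ S, if f k = g k then (1:ℝ) else 0)
      = ∏ k ∈ S, p (g k) := by
  have key : ∀ f : Fin l → Fin n,
      (∏ k, p (f k)) * (∏ k ∈ S, if f k = g k then (1:ℝ) else 0)
        = ∏ k, (if k ∈ S then (if f k = g k then p (f k) else 0) else p (f k)) := by
    intro f
    rw [← Finset.prod_mul_prod_compl S (fun k => p (f k)),
        ← Finset.prod_mul_prod_compl S
          (fun k => (if k ∈ S then (if f k = g k then p (f k) else 0) else p (f k)))]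
    rw [mul_right_comm, ← Finset.prod_mul_distrib]
    congr 1
    · apply Finset.prod_congr rfl
      intro k hk
      simp only [hk, if_true]
      split_ifs <;> ring
    · apply Finset.prod_congr rfl
      intro k hk
      simp only [Finset.mem_compl] at hk
      simp [hk]
  simp_rw [key]
  rw [← Fintype.prod_sum (fun k x => if k ∈ S then (if x = g k then p x else 0) else p x)]
  have : ∀ k : Fin l, (∑ x, if k ∈ S then (if x = g k then p x else 0) else p x)
      = if k ∈ S then p (g k) else 1 := by
    intro k
    by_cases hk : k ∈ S
    · simp only [hk, if_true]
      exact Finset.sum_ite_eq' univ (g k) p |>.trans (by simp)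
    · simp [hk, hp1]
  simp_rw [this]
  rw [Finset.prod_ite_mem, Finset.univ_inter]
open Finset

lemma bvb_pair_sum {n : ℕ} (x y : Fin n) :
    (∑ a : Fin n, (if x = a then (1:ℝ) else 0) * (if y = a then 1 else 0))
      = (if x = y then 1 else 0) := by
  rw [Finset.sum_eq_single x]
  · simp [eq_comm]
  · intro b _ hb
    simp [Ne.symm hb]
  · simp

lemma bvb_triple_sum {n : ℕ} (x y z : Fin n) :
    (∑ a : Fin n, (if x = a then (1:ℝ) else 0) * ((if y = a then 1 else 0)
      * (if z = a then 1 else 0)))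
      = (if x = z then 1 else 0) * (if y = z then 1 else 0) := by
  rw [Finset.sum_eq_single z]
  · simp
  · intro b _ hb
    simp [Ne.symm hb]
  · simp

lemma bvb_L2 {n l : ℕ} (p : Fin n → ℝ) (hp1 : ∑ i, p i = 1)
    {u v : Fin l} (huv : u ≠ v) :
    ∑ f : Fin l → Fin n, (∏ k, p (f k)) * (if f u = f v then (1:ℝ) else 0)
      = ∑ a, p a ^ 2 := by
  have point : ∀ f : Fin l → Fin n, (if f u = f v then (1:ℝ) else 0)
      = ∑ a, ∏ k ∈ ({u, v} : Finset (Fin l)), (if f k = a then (1:ℝ) else 0) := by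
    intro f
    rw [← bvb_pair_sum (f u) (f v)]
    exact Finset.sum_congr rfl fun a _ =>
      (Finset.prod_pair (f := fun k => if f k = a then (1:ℝ) else 0) huv).symm
  simp_rw [point, Finset.mul_sum]
  rw [Finset.sum_comm]
  calc ∑ a : Fin n, ∑ f : Fin l → Fin n, (∏ k, p (f k)) *
        ∏ k ∈ ({u, v} : Finset (Fin l)), (if f k = a then (1:ℝ) else 0)
      = ∑ a : Fin n, ∏ k ∈ ({u, v} : Finset (Fin l)), p a := by
        refine Finset.sum_congr rfl fun a _ => ?_
        simpa using bvb_marg p hp1 {u, v} (fun _ => a)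
    _ = ∑ a, p a ^ 2 := by
        refine Finset.sum_congr rfl fun a _ => ?_
        rw [Finset.prod_const, Finset.card_pair huv]

lemma bvb_L3 {n l : ℕ} (p : Fin n → ℝ) (hp1 : ∑ i, p i = 1)
    {s t₁ t₂ : Fin l} (h1 : t₁ ≠ s) (h2 : t₂ ≠ s) (h12 : t₁ ≠ t₂) :
    ∑ f : Fin l → Fin n, (∏ k, p (f k)) *
        ((if f t₁ = f s then (1:ℝ) else 0) * (if f t₂ = f s then (1:ℝ) else 0))
      = ∑ a, p a ^ 3 := by
  have hmem1 : t₁ ∉ ({t₂, s} : Finset (Fin l)) := by simp [h12, h1]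
  have hmem2 : t₂ ∉ ({s} : Finset (Fin l)) := by simp [h2]
  have point : ∀ f : Fin l → Fin n,
      ((if f t₁ = f s then (1:ℝ) else 0) * (if f t₂ = f s then (1:ℝ) else 0))
      = ∑ a, ∏ k ∈ ({t₁, t₂, s} : Finset (Fin l)), (if f k = a then (1:ℝ) else 0) := by
    intro f
    rw [← bvb_triple_sum (f t₁) (f t₂) (f s)]
    refine Finset.sum_congr rfl fun a _ => ?_
    rw [Finset.prod_insert hmem1, Finset.prod_insert hmem2, Finset.prod_singleton]
  simp_rw [point, Finset.mul_sum]
  rw [Finset.sum_comm]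
  calc ∑ a : Fin n, ∑ f : Fin l → Fin n, (∏ k, p (f k)) *
        ∏ k ∈ ({t₁, t₂, s} : Finset (Fin l)), (if f k = a then (1:ℝ) else 0)
      = ∑ a : Fin n, ∏ k ∈ ({t₁, t₂, s} : Finset (Fin l)), p a := by
        refine Finset.sum_congr rfl fun a _ => ?_
        simpa using bvb_marg p hp1 _ (fun _ => a)
    _ = ∑ a, p a ^ 3 := by
        refine Finset.sum_congr rfl fun a _ => ?_
        rw [Finset.prod_const]
        congr 1
        rw [Finset.card_insert_of_notMem hmem1, Finset.card_insert_of_notMem hmem2,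
          Finset.card_singleton]

lemma bvb_L4 {n l : ℕ} (p : Fin n → ℝ) (hp1 : ∑ i, p i = 1)
    {i j k m : Fin l} (hij : i ≠ j) (hkm : k ≠ m) (hik : i ≠ k) (him : i ≠ m)
    (hjk : j ≠ k) (hjm : j ≠ m) :
    ∑ f : Fin l → Fin n, (∏ t, p (f t)) *
        ((if f i = f j then (1:ℝ) else 0) * (if f k = f m then (1:ℝ) else 0))
      = (∑ a, p a ^ 2) ^ 2 := by
  set g : Fin n → Fin n → Fin l → Fin n :=
    fun a b t => if t = i ∨ t = j then a else b with hg
  have hgi : ∀ a b, g a b i = a := by intro a b; simp [hg]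
  have hgj : ∀ a b, g a b j = a := by intro a b; simp [hg]
  have hgk : ∀ a b, g a b k = b := by intro a b; simp [hg, Ne.symm hik |>.symm, hik.symm, hjk.symm]
  have hgm : ∀ a b, g a b m = b := by intro a b; simp [hg, him.symm, hjm.symm]
  have hm1 : i ∉ ({j, k, m} : Finset (Fin l)) := by simp [hij, hik, him]
  have hm2 : j ∉ ({k, m} : Finset (Fin l)) := by simp [hjk, hjm]
  have hm3 : k ∉ ({m} : Finset (Fin l)) := by simp [hkm]
  have point : ∀ f : Fin l → Fin n,
      ((if f i = f j then (1:ℝ) else 0) * (if f k = f m then (1:ℝ) else 0))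
      = ∑ a, ∑ b, ∏ t ∈ ({i, j, k, m} : Finset (Fin l)),
          (if f t = g a b t then (1:ℝ) else 0) := by
    intro f
    rw [← bvb_pair_sum (f i) (f j), ← bvb_pair_sum (f k) (f m), Finset.sum_mul_sum]
    refine Finset.sum_congr rfl fun a _ => Finset.sum_congr rfl fun b _ => ?_
    rw [Finset.prod_insert hm1, Finset.prod_insert hm2, Finset.prod_insert hm3,
      Finset.prod_singleton, hgi, hgj, hgk, hgm]
    ring
  simp_rw [point, Finset.mul_sum]
  rw [Finset.sum_comm]
  have swap2 : ∀ a : Fin n,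
      (∑ f : Fin l → Fin n, ∑ b : Fin n, (∏ t, p (f t)) *
        ∏ t ∈ ({i, j, k, m} : Finset (Fin l)), (if f t = g a b t then (1:ℝ) else 0))
      = ∑ b : Fin n, ∑ f : Fin l → Fin n, (∏ t, p (f t)) *
        ∏ t ∈ ({i, j, k, m} : Finset (Fin l)), (if f t = g a b t then (1:ℝ) else 0) := by
    intro a; rw [Finset.sum_comm]
  simp_rw [swap2]
  have hmarg : ∀ a b : Fin n,
      (∑ f : Fin l → Fin n, (∏ t, p (f t)) *
        ∏ t ∈ ({i, j, k, m} : Finset (Fin l)), (if f t = g a b t then (1:ℝ) else 0))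
      = p a ^ 2 * p b ^ 2 := by
    intro a b
    rw [bvb_marg p hp1 _ (g a b), Finset.prod_insert hm1, Finset.prod_insert hm2,
      Finset.prod_insert hm3, Finset.prod_singleton, hgi, hgj, hgk, hgm]
    ring
  simp_rw [hmarg]
  rw [← Finset.sum_mul_sum]
  ring

lemma bvb_exp {Ω : Type*} [MeasureSpace Ω] [IsProbabilityMeasure (ℙ : Measure Ω)]
    {n l : ℕ} (p : Fin n → ℝ) (hp0 : ∀ i, 0 ≤ p i)
    (X : Fin l → Ω → Fin n) (hmeas : ∀ k, Measurable (X k))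
    (hindep : iIndepFun X ℙ)
    (hdist : ∀ k i, ℙ {ω | X k ω = i} = ENNReal.ofReal (p i))
    (g : (Fin l → Fin n) → ℝ) :
    ∫ ω, g (fun k => X k ω) = ∑ f : Fin l → Fin n, (∏ k, p (f k)) * g f := by
  set A : (Fin l → Fin n) → Set Ω := fun f => ⋂ k, X k ⁻¹' {f k} with hA
  have hAmeas : ∀ f, MeasurableSet (A f) :=
    fun f => MeasurableSet.iInter fun k => hmeas k (measurableSet_singleton _)
  have hAprob : ∀ f, ℙ (A f) = ENNReal.ofReal (∏ k, p (f k)) := by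
    intro f
    have h1 := hindep.measure_inter_preimage_eq_mul (univ : Finset (Fin l))
      (sets := fun k => {f k}) (fun k _ => measurableSet_singleton _)
    have h2 : ⋂ k ∈ (univ : Finset (Fin l)), X k ⁻¹' {f k} = A f := by
      simp [hA]
    rw [h2] at h1
    rw [h1]
    have h3 : ∀ k : Fin l, ℙ (X k ⁻¹' {f k}) = ENNReal.ofReal (p (f k)) := by
      intro k
      have : X k ⁻¹' {f k} = {ω | X k ω = f k} := by ext ω; simp
      rw [this, hdist]
    calc ∏ k : Fin l, ℙ (X k ⁻¹' (fun k => {f k}) k)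
        = ∏ k : Fin l, ENNReal.ofReal (p (f k)) := Finset.prod_congr rfl fun k _ => h3 k
      _ = ENNReal.ofReal (∏ k, p (f k)) :=
          (ENNReal.ofReal_prod_of_nonneg (fun k _ => hp0 (f k))).symm
  have hpoint : ∀ ω, g (fun k => X k ω)
      = ∑ f : Fin l → Fin n, (A f).indicator (fun _ => g f) ω := by
    intro ω
    rw [Finset.sum_eq_single (fun k => X k ω)]
    · rw [Set.indicator_of_mem]
      simp [hA]
    · intro f _ hf
      rw [Set.indicator_of_notMem]
      simp only [hA, Set.mem_iInter, Set.mem_preimage, Set.mem_singleton_iff]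
      intro h
      exact hf (funext fun k => (h k).symm)
    · simp
  have hint : ∀ f : Fin l → Fin n, Integrable ((A f).indicator (fun _ => g f)) ℙ :=
    fun f => (integrable_const (g f)).indicator (hAmeas f)
  calc ∫ ω, g (fun k => X k ω)
      = ∫ ω, ∑ f : Fin l → Fin n, (A f).indicator (fun _ => g f) ω := by
        exact integral_congr_ae (Filter.Eventually.of_forall hpoint)
    _ = ∑ f : Fin l → Fin n, ∫ ω, (A f).indicator (fun _ => g f) ω :=
        integral_finset_sum _ (fun f _ => hint f)
    _ = ∑ f : Fin l → Fin n, (∏ k, p (f k)) * g f := by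
        refine Finset.sum_congr rfl fun f _ => ?_
        rw [integral_indicator_const (g f) (hAmeas f), measureReal_def, hAprob f,
          ENNReal.toReal_ofReal (Finset.prod_nonneg fun k _ => hp0 (f k)), smul_eq_mul]
open Finset

lemma bvb_q3 {n : ℕ} (hn : 1 ≤ n) (p : Fin n → ℝ) (hp0 : ∀ i, 0 ≤ p i)
    (hp1 : ∑ i, p i = 1) :
    ∑ a, p a ^ 3 ≤ (Real.sqrt n + 1) / 2 * (∑ a, p a ^ 2) ^ 2 := by
  set q2 : ℝ := ∑ a, p a ^ 2 with hq2
  have hkey : ∀ i, 2 * p i ≤ (Real.sqrt n + 1) * q2 := by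
    intro i
    rcases eq_or_lt_of_le hn with h1 | h2
    · -- n = 1
      have hn1 : n = 1 := h1.symm
      subst hn1
      have hp : p i = 1 := by
        rw [← hp1]
        rw [Fin.sum_univ_one]
        congr
        exact Subsingleton.elim i 0
      have hq : q2 = 1 := by
        rw [hq2, Fin.sum_univ_one]
        have : p 0 = 1 := by rw [← hp]; congr; exact Subsingleton.elim 0 i
        rw [this]; norm_num
      rw [hp, hq]
      have : Real.sqrt 1 = 1 := Real.sqrt_one
      simp only [Nat.cast_one, this]
      norm_num
    · -- n ≥ 2
      have hcard : ((univ.erase i).card : ℝ) = (n : ℝ) - 1 := by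
        rw [Finset.card_erase_of_mem (Finset.mem_univ i), Finset.card_univ, Fintype.card_fin]
        have : (1:ℕ) ≤ n := hn
        push_cast [Nat.cast_sub this]
        ring
      have hcs : (∑ j ∈ univ.erase i, p j) ^ 2
          ≤ ((univ.erase i).card : ℝ) * ∑ j ∈ univ.erase i, p j ^ 2 := by
        exact sq_sum_le_card_mul_sum_sq
      have hsum1 : ∑ j ∈ univ.erase i, p j = 1 - p i := by
        have := Finset.add_sum_erase univ p (Finset.mem_univ i)
        rw [hp1] at this; linarith
      have hsum2 : ∑ j ∈ univ.erase i, p j ^ 2 = q2 - p i ^ 2 := by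
        have := Finset.add_sum_erase univ (fun a => p a ^ 2) (Finset.mem_univ i)
        rw [← hq2] at this; linarith
      rw [hsum1, hsum2, hcard] at hcs
      have hsq : Real.sqrt n ^ 2 = n := Real.sq_sqrt (by positivity)
      have hamgm : 2 * Real.sqrt n * p i ≤ (n : ℝ) * p i ^ 2 + 1 := by
        nlinarith [sq_nonneg (Real.sqrt n * p i - 1)]
      have hfact : (Real.sqrt n - 1) * (2 * p i) ≤ ((n:ℝ) - 1) * q2 := by
        nlinarith [hcs, hamgm]
      have hexp : ((n:ℝ) - 1) * q2 = (Real.sqrt n - 1) * ((Real.sqrt n + 1) * q2) := by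
        linear_combination (-q2) * hsq
      have hpos : 0 < Real.sqrt n - 1 := by
        have h2' : (1:ℝ) < (n:ℝ) := by exact_mod_cast h2
        have : 1 < Real.sqrt n := by
          rw [show (1:ℝ) = Real.sqrt 1 from Real.sqrt_one.symm]
          exact Real.sqrt_lt_sqrt (by norm_num) h2'
        linarith
      exact le_of_mul_le_mul_left (by linarith [hfact, hexp]) hpos
  have hterm : ∀ a, p a ^ 3 ≤ ((Real.sqrt n + 1) / 2 * q2) * p a ^ 2 := by
    intro a
    have h1 : p a ≤ (Real.sqrt n + 1) / 2 * q2 := by linarith [hkey a]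
    have h2 : (0:ℝ) ≤ p a ^ 2 := sq_nonneg _
    calc p a ^ 3 = p a * p a ^ 2 := by ring
      _ ≤ ((Real.sqrt n + 1) / 2 * q2) * p a ^ 2 := mul_le_mul_of_nonneg_right h1 h2
  calc ∑ a, p a ^ 3 ≤ ∑ a, ((Real.sqrt n + 1) / 2 * q2) * p a ^ 2 :=
        Finset.sum_le_sum fun a _ => hterm a
    _ = (Real.sqrt n + 1) / 2 * q2 ^ 2 := by rw [← Finset.mul_sum, ← hq2]; ring
open Finset

lemma bvb_cardE {l : ℕ} (hl : 1 ≤ l) :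
    2 * ((univ : Finset (Fin l × Fin l)).filter fun x => x.1 < x.2).card = l * (l - 1) := by
  set E := (univ : Finset (Fin l × Fin l)).filter fun x => x.1 < x.2 with hE
  set F := (univ : Finset (Fin l × Fin l)).filter fun x => x.2 < x.1 with hF
  have hcardEF : E.card = F.card := by
    apply Finset.card_bij' (fun x _ => Prod.swap x) (fun x _ => Prod.swap x)
    · intro a ha; simp only [hE, hF, Finset.mem_filter, Finset.mem_univ, true_and] at ha ⊢
      exact ha
    · intro a ha; simp only [hE, hF, Finset.mem_filter, Finset.mem_univ, true_and] at ha ⊢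
      exact ha
    · intro a _; simp
    · intro a _; simp
  have hdisj : Disjoint E F := by
    rw [Finset.disjoint_left]
    intro a haE haF
    simp only [hE, hF, Finset.mem_filter] at haE haF
    exact absurd haE.2 (lt_asymm haF.2)
  have hunion : E ∪ F = (univ : Finset (Fin l)).offDiag := by
    ext x
    simp only [hE, hF, Finset.mem_union, Finset.mem_filter, Finset.mem_univ, true_and,
      Finset.mem_offDiag, ne_iff_lt_or_gt]
  have hoff : ((univ : Finset (Fin l)).offDiag).card = l * l - l := by
    rw [Finset.offDiag_card, Finset.card_univ, Fintype.card_fin]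
  have := Finset.card_union_of_disjoint hdisj
  rw [hunion, hoff, ← hcardEF] at this
  have hll : l * (l - 1) = l * l - l := by
    cases l with
    | zero => simp
    | succ m => simp [Nat.succ_sub_one, Nat.mul_sub, Nat.succ_mul, Nat.mul_succ]
  omega

lemma bvb_card_through {l : ℕ} (v : Fin l) :
    (((univ : Finset (Fin l × Fin l)).filter
        fun y => y.1 < y.2 ∧ (y.1 = v ∨ y.2 = v))).card ≤ l - 1 := by
  have h1 : ((univ : Finset (Fin l)).erase v).card = l - 1 := by
    rw [Finset.card_erase_of_mem (Finset.mem_univ v), Finset.card_univ, Fintype.card_fin]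
  rw [← h1]
  apply Finset.card_le_card_of_injOn (fun y => if y.1 = v then y.2 else y.1)
  · intro y hy
    simp only [Finset.mem_coe, Finset.mem_filter, Finset.mem_univ, true_and] at hy
    obtain ⟨hlt, hor⟩ := hy
    simp only [Finset.mem_coe, Finset.mem_erase, Finset.mem_univ, and_true]
    split_ifs with h
    · exact fun hc => absurd hlt (by rw [h, hc]; exact lt_irrefl v)
    · rcases hor with h' | h'
      · exact absurd h' h
      · exact fun hc => absurd hlt (by rw [hc, h']; exact lt_irrefl v)
  · intro y hy z hz h
    simp only [Finset.mem_coe, Finset.mem_filter, Finset.mem_univ, true_and] at hy hz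
    obtain ⟨hylt, hyor⟩ := hy
    obtain ⟨hzlt, hzor⟩ := hz
    simp only at h
    split_ifs at h with h1' h2' h2'
    · -- y.1 = v, z.1 = v, y.2 = z.2
      exact Prod.ext (h1'.trans h2'.symm) h
    · -- y.1 = v, z.1 ≠ v so z.2 = v, y.2 = z.1
      rcases hzor with hz1 | hz2
      · exact absurd hz1 h2'
      · exfalso
        have : z.1 < z.1 := by
          calc z.1 < z.2 := hzlt
            _ = v := hz2
            _ = y.1 := h1'.symm
            _ < y.2 := hylt
            _ = z.1 := h
        exact lt_irrefl _ this
    · rcases hyor with hy1 | hy2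
      · exact absurd hy1 h1'
      · exfalso
        have : y.1 < y.1 := by
          calc y.1 < y.2 := hylt
            _ = v := hy2
            _ = z.1 := h2'.symm
            _ < z.2 := hzlt
            _ = y.1 := h.symm
        exact lt_irrefl _ this
    · rcases hyor with hy1 | hy2
      · exact absurd hy1 h1'
      · rcases hzor with hz1 | hz2
        · exact absurd hz1 h2'
        · exact Prod.ext h (hy2.trans hz2.symm)

lemma bvb_c_share {n l : ℕ} (p : Fin n → ℝ) (hp1 : ∑ i, p i = 1)
    {i j k m : Fin l} (hij : i < j) (hkm : k < m)
    (hne : (i, j) ≠ (k, m)) (hshare : k = i ∨ k = j ∨ m = i ∨ m = j) :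
    ∑ f : Fin l → Fin n, (∏ t, p (f t)) *
        ((if f i = f j then (1:ℝ) else 0) * (if f k = f m then (1:ℝ) else 0))
      = ∑ a, p a ^ 3 := by
  have flip : ∀ (f : Fin l → Fin n) (a b : Fin l),
      (if f a = f b then (1:ℝ) else 0) = (if f b = f a then (1:ℝ) else 0) :=
    fun f a b => if_congr eq_comm rfl rfl
  rcases hshare with h | h | h | h
  · -- k = i, so j ≠ m
    subst h
    have hjm : j ≠ m := fun hc => hne (by rw [hc])
    have step : ∀ f : Fin l → Fin n,
        ((if f k = f j then (1:ℝ) else 0) * (if f k = f m then (1:ℝ) else 0))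
        = ((if f j = f k then (1:ℝ) else 0) * (if f m = f k then (1:ℝ) else 0)) := by
      intro f; rw [flip f k j, flip f k m]
    simp_rw [step]
    exact bvb_L3 p hp1 (ne_of_gt hij) (ne_of_gt hkm) hjm
  · -- k = j
    subst h
    have step : ∀ f : Fin l → Fin n,
        ((if f i = f k then (1:ℝ) else 0) * (if f k = f m then (1:ℝ) else 0))
        = ((if f i = f k then (1:ℝ) else 0) * (if f m = f k then (1:ℝ) else 0)) := by
      intro f; rw [flip f k m]
    simp_rw [step]
    exact bvb_L3 p hp1 (ne_of_lt hij) (ne_of_gt hkm) (ne_of_lt (lt_trans hij hkm))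
  · -- m = i
    subst h
    have step : ∀ f : Fin l → Fin n,
        ((if f m = f j then (1:ℝ) else 0) * (if f k = f m then (1:ℝ) else 0))
        = ((if f j = f m then (1:ℝ) else 0) * (if f k = f m then (1:ℝ) else 0)) := by
      intro f; rw [flip f m j]
    simp_rw [step]
    exact bvb_L3 p hp1 (ne_of_gt hij) (ne_of_lt hkm) (ne_of_gt (lt_trans hkm hij))
  · -- m = j
    subst h
    have hik : i ≠ k := fun hc => hne (by rw [hc])
    exact bvb_L3 p hp1 (ne_of_lt hij) (ne_of_lt hkm) hik


set_option maxHeartbeats 1000000 in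
theorem birthday_variance_bound
    {Ω : Type*} [MeasureSpace Ω] [IsProbabilityMeasure (ℙ : Measure Ω)]
    (n l : ℕ) (hn : 1 ≤ n) (hl : 1 ≤ l)
    (p : Fin n → ℝ) (hp0 : ∀ i, 0 ≤ p i) (hp1 : ∑ i, p i = 1)
    (X : Fin l → Ω → Fin n) (hmeas : ∀ k, Measurable (X k))
    (hindep : iIndepFun X ℙ)
    (hdist : ∀ k i, ℙ {ω | X k ω = i} = ENNReal.ofReal (p i))
    (Z : Ω → ℝ)
    (hZ : Z = fun ω => ∑ i : Fin l, ∑ j : Fin l,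
      if i < j ∧ X i ω = X j ω then (1 : ℝ) else 0) :
    variance Z ℙ ≤ (∫ ω, Z ω) * (1 + 2 * Real.sqrt n / l * ∫ ω, Z ω) := by
  have hl0 : (0:ℝ) < l := by exact_mod_cast hl
  have hq2nn : (0:ℝ) ≤ ∑ a, p a ^ 2 := Finset.sum_nonneg fun a _ => sq_nonneg _
  have hsqrt1 : (1:ℝ) ≤ Real.sqrt n := by
    rw [show (1:ℝ) = Real.sqrt 1 from Real.sqrt_one.symm]
    exact Real.sqrt_le_sqrt (by exact_mod_cast hn)
  set q2 : ℝ := ∑ a, p a ^ 2 with hq2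
  set q3 : ℝ := ∑ a, p a ^ 3 with hq3
  set E : Finset (Fin l × Fin l) := univ.filter (fun x => x.1 < x.2) with hE
  set gZ : (Fin l → Fin n) → ℝ :=
    fun f => ∑ x ∈ E, (if f x.1 = f x.2 then (1:ℝ) else 0) with hgZ
  set c : (Fin l × Fin l) → (Fin l × Fin l) → ℝ := fun x y =>
    ∑ f : Fin l → Fin n, (∏ t, p (f t)) *
      ((if f x.1 = f x.2 then (1:ℝ) else 0) * (if f y.1 = f y.2 then (1:ℝ) else 0)) with hc
  -- Z in terms of gZ
  have hZg : Z = fun ω => gZ (fun k => X k ω) := by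
    rw [hZ]; funext ω
    rw [hgZ]
    show _ = ∑ x ∈ E, (if X x.1 ω = X x.2 ω then (1:ℝ) else 0)
    rw [hE, Finset.sum_filter, Fintype.sum_prod_type]
    exact Finset.sum_congr rfl fun a _ => Finset.sum_congr rfl fun b _ => ite_and _ _ _ _
  -- expectation of Z
  have hEZ : (∫ ω, Z ω) = (E.card : ℝ) * q2 := by
    rw [hZg, bvb_exp p hp0 X hmeas hindep hdist gZ]
    simp only [hgZ, Finset.mul_sum]
    rw [Finset.sum_comm]
    rw [Finset.sum_congr rfl (fun x hx => bvb_L2 p hp1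
      (ne_of_lt (Finset.mem_filter.mp hx).2))]
    rw [Finset.sum_const, nsmul_eq_mul, hq2]
  -- second moment
  have hEZ2 : (∫ ω, Z ω ^ 2) = ∑ x ∈ E, ∑ y ∈ E, c x y := by
    have h1 : (∫ ω, Z ω ^ 2) = ∫ ω, (fun f => gZ f ^ 2) (fun k => X k ω) := by
      rw [hZg]
    rw [h1, bvb_exp p hp0 X hmeas hindep hdist (fun f => gZ f ^ 2)]
    have hsq : ∀ f : Fin l → Fin n, gZ f ^ 2
        = ∑ x ∈ E, ∑ y ∈ E, ((if f x.1 = f x.2 then (1:ℝ) else 0)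
            * (if f y.1 = f y.2 then (1:ℝ) else 0)) := by
      intro f
      rw [sq, hgZ]
      exact Finset.sum_mul_sum _ _ _ _
    simp_rw [hsq, Finset.mul_sum]
    rw [Finset.sum_comm]
    refine Finset.sum_congr rfl fun x _ => ?_
    rw [Finset.sum_comm]
  -- measurability and Memℒp
  have hsm : ∀ i j : Fin l, MeasurableSet {ω | X i ω = X j ω} := by
    intro i j
    have heq : {ω | X i ω = X j ω} = ⋃ a, ((X i ⁻¹' {a}) ∩ (X j ⁻¹' {a})) := by
      ext ω
      simp only [Set.mem_setOf_eq, Set.mem_iUnion, Set.mem_inter_iff, Set.mem_preimage,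
        Set.mem_singleton_iff]
      exact ⟨fun h => ⟨X j ω, h, rfl⟩, fun ⟨a, h1, h2⟩ => h1.trans h2.symm⟩
    rw [heq]
    exact MeasurableSet.iUnion fun a =>
      (hmeas i (measurableSet_singleton a)).inter (hmeas j (measurableSet_singleton a))
  have hZmeas : Measurable Z := by
    rw [hZ]
    apply Finset.measurable_sum
    intro i _
    apply Finset.measurable_sum
    intro j _
    have hset : MeasurableSet {ω | i < j ∧ X i ω = X j ω} := by
      by_cases hij : i < j
      · simp only [hij, true_and]
        exact hsm i j
      · simp only [hij, false_and]
        exact MeasurableSet.empty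
    exact Measurable.ite hset measurable_const measurable_const
  have hbound : ∀ ω, ‖Z ω‖ ≤ ((l : ℝ)) ^ 2 := by
    intro ω
    rw [hZ, Real.norm_eq_abs, abs_of_nonneg (Finset.sum_nonneg fun i _ =>
      Finset.sum_nonneg fun j _ => by positivity)]
    calc (∑ i : Fin l, ∑ j : Fin l, if i < j ∧ X i ω = X j ω then (1:ℝ) else 0)
        ≤ ∑ _i : Fin l, ∑ _j : Fin l, (1:ℝ) := by
          refine Finset.sum_le_sum fun i _ => Finset.sum_le_sum fun j _ => ?_
          split_ifs <;> norm_num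
      _ = (l : ℝ) ^ 2 := by simp [Finset.sum_const]; ring
  have hMem : MemLp Z 2 ℙ :=
    MemLp.of_bound hZmeas.aestronglyMeasurable _ (Filter.Eventually.of_forall hbound)
  -- variance formula
  have hvar : variance Z ℙ = ∑ x ∈ E, ∑ y ∈ E, (c x y - q2 ^ 2) := by
    have hv1 : variance Z ℙ = (∫ ω, Z ω ^ 2) - (∫ ω, Z ω) ^ 2 := by
      rw [variance_eq_sub hMem]
      congr 1
    rw [hv1, hEZ2, hEZ]
    have hconst : ((E.card : ℝ) * q2) ^ 2 = ∑ x ∈ E, ∑ y ∈ E, q2 ^ 2 := by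
      simp [Finset.sum_const, nsmul_eq_mul]; ring
    rw [hconst, ← Finset.sum_sub_distrib]
    exact Finset.sum_congr rfl fun x _ => (Finset.sum_sub_distrib _ _).symm
  -- q3 bound
  have hq3b : q3 - q2 ^ 2 ≤ (Real.sqrt n - 1) / 2 * q2 ^ 2 := by
    have := bvb_q3 hn p hp0 hp1
    rw [← hq2, ← hq3] at this
    nlinarith [sq_nonneg q2]
  have hq3bnn : 0 ≤ (Real.sqrt n - 1) / 2 * q2 ^ 2 := by
    have : 0 ≤ Real.sqrt n - 1 := by linarith
    positivity
  -- inner bound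
  have hinner : ∀ x ∈ E, (∑ y ∈ E, (c x y - q2 ^ 2))
      ≤ q2 + ((l:ℝ) - 1) * (Real.sqrt n - 1) * q2 ^ 2 := by
    intro x hx
    have hx12 : x.1 < x.2 := (Finset.mem_filter.mp hx).2
    rw [← Finset.add_sum_erase E _ hx]
    have hcxx : c x x = q2 := by
      simp only [hc]
      have hcollapse : ∀ f : Fin l → Fin n,
          (∏ t, p (f t)) * ((if f x.1 = f x.2 then (1:ℝ) else 0)
            * (if f x.1 = f x.2 then (1:ℝ) else 0))
          = (∏ t, p (f t)) * (if f x.1 = f x.2 then (1:ℝ) else 0) := by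
        intro f; split_ifs <;> ring
      rw [Finset.sum_congr rfl fun f _ => hcollapse f]
      exact bvb_L2 p hp1 (ne_of_lt hx12)
    -- split erase into share / non-share
    rw [← Finset.sum_filter_add_sum_filter_not (E.erase x)
      (fun y => y.1 = x.1 ∨ y.1 = x.2 ∨ y.2 = x.1 ∨ y.2 = x.2)]
    have hnonshare : (∑ y ∈ (E.erase x).filter
        (fun y => ¬(y.1 = x.1 ∨ y.1 = x.2 ∨ y.2 = x.1 ∨ y.2 = x.2)), (c x y - q2 ^ 2)) = 0 := by
      apply Finset.sum_eq_zero
      intro y hy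
      rw [Finset.mem_filter, Finset.mem_erase] at hy
      obtain ⟨⟨hyne, hyE⟩, hns⟩ := hy
      push_neg at hns
      obtain ⟨h1, h2, h3, h4⟩ := hns
      have hy12 : y.1 < y.2 := (Finset.mem_filter.mp hyE).2
      have : c x y = q2 ^ 2 := by
        simp only [hc, hq2]
        exact bvb_L4 p hp1 (ne_of_lt hx12) (ne_of_lt hy12)
          (Ne.symm h1) (Ne.symm h3) (Ne.symm h2) (Ne.symm h4)
      rw [this]; ring
    have hshare : (∑ y ∈ (E.erase x).filter
        (fun y => y.1 = x.1 ∨ y.1 = x.2 ∨ y.2 = x.1 ∨ y.2 = x.2), (c x y - q2 ^ 2))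
        ≤ 2 * ((l:ℝ) - 1) * ((Real.sqrt n - 1) / 2 * q2 ^ 2) := by
      have hterm : ∀ y ∈ (E.erase x).filter
          (fun y => y.1 = x.1 ∨ y.1 = x.2 ∨ y.2 = x.1 ∨ y.2 = x.2),
          c x y - q2 ^ 2 ≤ (Real.sqrt n - 1) / 2 * q2 ^ 2 := by
        intro y hy
        rw [Finset.mem_filter, Finset.mem_erase] at hy
        obtain ⟨⟨hyne, hyE⟩, hs⟩ := hy
        have hy12 : y.1 < y.2 := (Finset.mem_filter.mp hyE).2
        have hne' : (x.1, x.2) ≠ (y.1, y.2) := by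
          simp only [ne_eq, Prod.mk.injEq, not_and]
          intro h1 h2
          exact hyne (Prod.ext h1.symm h2.symm)
        have : c x y = q3 := by
          simp only [hc, hq3]
          exact bvb_c_share p hp1 hx12 hy12 hne' hs
        rw [this]
        exact hq3b
      calc (∑ y ∈ (E.erase x).filter
            (fun y => y.1 = x.1 ∨ y.1 = x.2 ∨ y.2 = x.1 ∨ y.2 = x.2), (c x y - q2 ^ 2))
          ≤ (((E.erase x).filter
            (fun y => y.1 = x.1 ∨ y.1 = x.2 ∨ y.2 = x.1 ∨ y.2 = x.2)).card : ℝ)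
              * ((Real.sqrt n - 1) / 2 * q2 ^ 2) := by
            have := Finset.sum_le_card_nsmul _ _ _ hterm
            rwa [nsmul_eq_mul] at this
        _ ≤ 2 * ((l:ℝ) - 1) * ((Real.sqrt n - 1) / 2 * q2 ^ 2) := by
            apply mul_le_mul_of_nonneg_right _ hq3bnn
            -- card bound
            have hsub : (E.erase x).filter
                (fun y => y.1 = x.1 ∨ y.1 = x.2 ∨ y.2 = x.1 ∨ y.2 = x.2)
                ⊆ ((univ : Finset (Fin l × Fin l)).filter
                    fun y => y.1 < y.2 ∧ (y.1 = x.1 ∨ y.2 = x.1))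
                  ∪ ((univ : Finset (Fin l × Fin l)).filter
                    fun y => y.1 < y.2 ∧ (y.1 = x.2 ∨ y.2 = x.2)) := by
              intro y hy
              rw [Finset.mem_filter, Finset.mem_erase] at hy
              obtain ⟨⟨hyne, hyE⟩, hs⟩ := hy
              have hy12 : y.1 < y.2 := (Finset.mem_filter.mp hyE).2
              rw [Finset.mem_union, Finset.mem_filter, Finset.mem_filter]
              simp only [Finset.mem_univ, true_and]
              tauto
            have hcard := Finset.card_le_card hsub
            have hu := Finset.card_union_le
              ((univ : Finset (Fin l × Fin l)).filter
                    fun y => y.1 < y.2 ∧ (y.1 = x.1 ∨ y.2 = x.1))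
              ((univ : Finset (Fin l × Fin l)).filter
                    fun y => y.1 < y.2 ∧ (y.1 = x.2 ∨ y.2 = x.2))
            have h1 := bvb_card_through x.1
            have h2 := bvb_card_through x.2
            have : (((E.erase x).filter
                (fun y => y.1 = x.1 ∨ y.1 = x.2 ∨ y.2 = x.1 ∨ y.2 = x.2)).card) ≤ 2 * (l - 1) := by
              omega
            calc ((((E.erase x).filter
                (fun y => y.1 = x.1 ∨ y.1 = x.2 ∨ y.2 = x.1 ∨ y.2 = x.2)).card) : ℝ)
                ≤ ((2 * (l - 1) : ℕ) : ℝ) := by exact_mod_cast this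
              _ = 2 * ((l:ℝ) - 1) := by
                  push_cast [Nat.cast_sub hl]
                  ring
    have hdiag : c x x - q2 ^ 2 ≤ q2 := by rw [hcxx]; nlinarith [sq_nonneg q2]
    calc c x x - q2 ^ 2
          + ((∑ y ∈ (E.erase x).filter
            (fun y => y.1 = x.1 ∨ y.1 = x.2 ∨ y.2 = x.1 ∨ y.2 = x.2), (c x y - q2 ^ 2))
          + (∑ y ∈ (E.erase x).filter
            (fun y => ¬(y.1 = x.1 ∨ y.1 = x.2 ∨ y.2 = x.1 ∨ y.2 = x.2)), (c x y - q2 ^ 2)))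
        ≤ q2 + (2 * ((l:ℝ) - 1) * ((Real.sqrt n - 1) / 2 * q2 ^ 2) + 0) :=
          add_le_add hdiag (add_le_add hshare (le_of_eq hnonshare))
      _ = q2 + ((l:ℝ) - 1) * (Real.sqrt n - 1) * q2 ^ 2 := by ring
  -- total bound
  have htotal : variance Z ℙ
      ≤ (E.card : ℝ) * (q2 + ((l:ℝ) - 1) * (Real.sqrt n - 1) * q2 ^ 2) := by
    rw [hvar]
    calc (∑ x ∈ E, ∑ y ∈ E, (c x y - q2 ^ 2))
        ≤ ∑ x ∈ E, (q2 + ((l:ℝ) - 1) * (Real.sqrt n - 1) * q2 ^ 2) :=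
          Finset.sum_le_sum hinner
      _ = (E.card : ℝ) * (q2 + ((l:ℝ) - 1) * (Real.sqrt n - 1) * q2 ^ 2) := by
          rw [Finset.sum_const, nsmul_eq_mul]
  -- cardinality identity
  have hcast : 2 * (E.card : ℝ) = (l : ℝ) * ((l:ℝ) - 1) := by
    have h := bvb_cardE (l := l) hl
    rw [← hE] at h
    have h' : ((2 * E.card : ℕ) : ℝ) = ((l * (l - 1) : ℕ) : ℝ) := by exact_mod_cast h
    push_cast [Nat.cast_sub hl] at h'
    linarith
  -- finish
  rw [hEZ]
  set B : ℝ := (E.card : ℝ) with hB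
  have hBnn : 0 ≤ B := by positivity
  have hkey : 2 * Real.sqrt n / l * B = ((l:ℝ) - 1) * Real.sqrt n := by
    field_simp
    linear_combination hcast
  calc variance Z ℙ ≤ B * (q2 + ((l:ℝ) - 1) * (Real.sqrt n - 1) * q2 ^ 2) := htotal
    _ ≤ B * (q2 + ((l:ℝ) - 1) * Real.sqrt n * q2 ^ 2) := by
        apply mul_le_mul_of_nonneg_left _ hBnn
        have hll1 : (0:ℝ) ≤ (l:ℝ) - 1 := by
          have : (1:ℝ) ≤ (l:ℝ) := by exact_mod_cast hl
          linarith
        nlinarith [sq_nonneg q2]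
    _ = B * q2 * (1 + (((l:ℝ) - 1) * Real.sqrt n) * q2) := by ring
    _ = B * q2 * (1 + 2 * Real.sqrt n / l * (B * q2)) := by rw [← hkey]; ring
end

section
/- Let $(p_1,\dots,p_n)$ be a probability vector. Then $\sum_{i=1}^n p_i^3 \le \sqrt{n}\left(\sum_{i=1}^n p_i^2\right)^2$. -/
/-!
By Cauchy–Schwarz, `(∑ pᵢ³)² ≤ (∑ pᵢ²)(∑ pᵢ⁴)`, and `∑ pᵢ⁴ ≤ (∑ pᵢ²)²` since the `pᵢ²` are
nonnegative, so `(∑ pᵢ³)² ≤ (∑ pᵢ²)³`. Cauchy–Schwarz also gives `1 = (∑ pᵢ)² ≤ n ∑ pᵢ²`,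
hence `(∑ pᵢ²)³ ≤ n (∑ pᵢ²)⁴`, and taking square roots finishes the proof.
-/

open Finset

section SumPowers

variable {ι R : Type*} [CommSemiring R] [LinearOrder R] [IsStrictOrderedRing R] [ExistsAddOfLE R]
  {s : Finset ι} {f : ι → R}

theorem sq_sum_pow_three_le_sum_sq_pow_three :
    (∑ i ∈ s, f i ^ 3) ^ 2 ≤ (∑ i ∈ s, f i ^ 2) ^ 3 := by
  have cauchy_schwarz := sum_mul_sq_le_sq_mul_sq s f (fun i ↦ f i ^ 2)
  have sum_fourth_le : ∑ i ∈ s, (f i ^ 2) ^ 2 ≤ (∑ i ∈ s, f i ^ 2) ^ 2 :=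
    sum_sq_le_sq_sum_of_nonneg fun i _ ↦ sq_nonneg (f i)
  simp only [← pow_succ'] at cauchy_schwarz
  calc (∑ i ∈ s, f i ^ 3) ^ 2
      ≤ (∑ i ∈ s, f i ^ 2) * ∑ i ∈ s, (f i ^ 2) ^ 2 := cauchy_schwarz
    _ ≤ (∑ i ∈ s, f i ^ 2) * (∑ i ∈ s, f i ^ 2) ^ 2 :=
        mul_le_mul_of_nonneg_left sum_fourth_le (sum_nonneg fun i _ ↦ sq_nonneg (f i))
    _ = (∑ i ∈ s, f i ^ 2) ^ 3 := by ring

theorem one_le_card_mul_sum_sq (hf : ∑ i ∈ s, f i = 1) : 1 ≤ #s * ∑ i ∈ s, f i ^ 2 := by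
  simpa [hf] using sq_sum_le_card_mul_sum_sq (s := s) (f := f)

end SumPowers

theorem le_sqrt_mul_sq_of_sq_le_pow_three {a b c : ℝ} (hb : 0 ≤ b) (h : a ^ 2 ≤ b ^ 3)
    (hc : 1 ≤ c * b) : a ≤ √c * b ^ 2 := by
  refine le_of_sq_le_sq ?_ (by positivity)
  calc a ^ 2 ≤ b ^ 3 := h
    _ ≤ c * b * b ^ 3 := le_mul_of_one_le_left (by positivity) hc
    _ = (√c * b ^ 2) ^ 2 := by
        rw [mul_pow, Real.sq_sqrt (by nlinarith)]; ring

theorem prob_vector_cube_sum_le_general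
    (n : ℕ)
    (p : Fin n → ℝ) (hp1 : ∑ i, p i = 1) :
    ∑ i, (p i) ^ 3 ≤ Real.sqrt n * (∑ i, (p i) ^ 2) ^ 2 := by
  have hcard : 1 ≤ (n : ℝ) * ∑ i, p i ^ 2 := by
    simpa using one_le_card_mul_sum_sq hp1
  exact le_sqrt_mul_sq_of_sq_le_pow_three (sum_nonneg fun i _ ↦ sq_nonneg (p i))
    sq_sum_pow_three_le_sum_sq_pow_three hcard

theorem prob_vector_cube_sum_le
    (n : ℕ) (hn : 1 ≤ n)
    (p : Fin n → ℝ) (hp0 : ∀ i, 0 ≤ p i) (hp1 : ∑ i, p i = 1) :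
    ∑ i, (p i) ^ 3 ≤ Real.sqrt n * (∑ i, (p i) ^ 2) ^ 2 :=
  prob_vector_cube_sum_le_general n p hp1
end

section
/- Let $0 < \delta \le 1$, let $(p_1,\dots,p_n)$ be a probability vector with $n\sum_{i=1}^n p_i^2 \ge 1 + \delta$, let $X_1,\dots,X_l$ be i.i.d. with law $p$, and let $Z = \sum_{1\le i<j\le l}\mathbf{1}(X_i = X_j)$. Then $\mathbf{P}\left(Z \le \binom{l}{2}\frac{1}{n}\left(1 + \frac{\delta}{2}\right)\right) \le \frac{16}{\delta^2}\left(\frac{1}{\mathbf{E}(Z)} + \frac{2\sqrt{n}}{l}\right)$. -/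
open MeasureTheory ProbabilityTheory Finset

set_option linter.unusedSectionVars false
set_option linter.unusedVariables false
set_option maxHeartbeats 1000000

section birthday_aux

lemma birthday_sqrt_le_amgm (c v : ℝ) (hc : 0 < c) (hv : 0 ≤ v) :
    Real.sqrt v ≤ c * v + 1 / (4 * c) := by
  obtain ⟨s, hs⟩ : ∃ s : ℝ, s = Real.sqrt v := ⟨_, rfl⟩
  rw [← hs]
  have hsv : s ^ 2 = v := by rw [hs]; exact Real.sq_sqrt hv
  have h2 : (2*c*s - 1)^2 = 4*c^2*v - 4*c*s + 1 := by rw [← hsv]; ring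
  have h3 : 4*c*s ≤ 4*c^2*v + 1 := by
    linarith [sq_nonneg (2*c*s - 1), h2]
  have h4 : s = (4*c*s)/(4*c) := by field_simp
  have h5 : (c*v + 1/(4*c)) * (4*c) = 4*c^2*v + 1 := by field_simp
  rw [h4, div_le_iff₀ (by positivity : (0:ℝ) < 4*c), h5]
  exact h3

lemma birthday_claimC_core (n x v D3 : ℝ) (hn : n = 1 ∨ 2 ≤ n) (hn1 : 1 ≤ n)
    (hx0 : 0 < x) (hx2 : x ^ 2 = n) (hv0 : 0 ≤ v)
    (hd3 : D3 ≤ v * Real.sqrt v) (hone : n = 1 → v = 0) :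
    D3 + v / n - v ^ 2 ≤ x / 2 * (v ^ 2 + 2 * v / n + 1 / n ^ 2) := by
  have hn0 : (0:ℝ) < n := by linarith
  obtain ⟨c, hc⟩ : ∃ c : ℝ, c = 1 + x / 2 := ⟨_, rfl⟩
  have hc0 : 0 < c := by rw [hc]; positivity
  have hamgm : v * Real.sqrt v ≤ c * v ^ 2 + v * (1 / (4 * c)) := by
    have h1 := mul_le_mul_of_nonneg_left (birthday_sqrt_le_amgm c v hc0 hv0) hv0
    nlinarith [h1]
  have hkey : v * (1 / (4 * c)) + v / n ≤ x * v / n + x / (2 * n ^ 2) := by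
    rcases hn with h1 | hn2
    · have hv1 : v = 0 := hone h1
      rw [hv1]; simp; positivity
    · have hxvn : x * v / n = v / x := by rw [← hx2]; field_simp
      rw [hxvn]
      have hx2' : (2:ℝ) ≤ x ^ 2 := by rw [hx2]; exact hn2
      have hxg : 1 ≤ x := by nlinarith
      have key2 : 1 / (4 * c) + 1 / n ≤ 1 / x := by
        rw [← hx2]
        rw [div_add_div _ _ (by positivity) (by positivity),
          div_le_div_iff₀ (by positivity) (by positivity), hc]
        nlinarith
      have h6 := mul_le_mul_of_nonneg_left key2 hv0
      have h8 : (0:ℝ) ≤ x / (2 * n ^ 2) := by positivity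
      have h9 : v * (1/(4*c) + 1/n) = v * (1/(4*c)) + v / n := by ring
      have h10 : v * (1/x) = v / x := by ring
      linarith [h9 ▸ h6]
  have hcv : c * v ^ 2 = v ^ 2 + x/2 * v^2 := by rw [hc]; ring
  have hexp : x/2 * (v^2 + 2*v/n + 1/n^2) = x/2*v^2 + x*v/n + x/(2*n^2) := by
    ring
  linarith [hd3, hamgm, hkey, hcv, hexp]

lemma birthday_claimC (n : ℕ) (hn : 1 ≤ n) (p : Fin n → ℝ) (hp0 : ∀ i, 0 ≤ p i)
    (hp1 : ∑ i, p i = 1) :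
    (∑ i, p i ^ 3) - (∑ i, p i ^ 2) ^ 2 ≤ Real.sqrt n / 2 * (∑ i, p i ^ 2) ^ 2 := by
  have hn0 : (0:ℝ) < n := by exact_mod_cast hn
  have hsum_d : ∑ i, (p i - 1 / n) = 0 := by
    simp [Finset.sum_sub_distrib, hp1]
    field_simp
    norm_num
  obtain ⟨v, hvdef⟩ : ∃ v : ℝ, v = (∑ i, p i ^ 2) - 1 / n := ⟨_, rfl⟩
  have hv : ∑ i, (p i - 1 / n) ^ 2 = v := by
    have h1 : ∀ i, (p i - 1/n) ^ 2 = p i ^ 2 - 2 / n * p i + 1 / n ^ 2 := by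
      intro i; field_simp; ring
    rw [Finset.sum_congr rfl fun i _ => h1 i]
    rw [Finset.sum_add_distrib, Finset.sum_sub_distrib, ← Finset.mul_sum, hp1, hvdef]
    simp [Finset.card_univ]
    field_simp
    ring
  have hnq : (1:ℝ) ≤ n * ∑ i, p i ^ 2 := by
    have h2 := sq_sum_le_card_mul_sum_sq (s := (univ : Finset (Fin n))) (f := p)
    rw [hp1] at h2
    simpa [Finset.card_univ] using h2
  have hv0 : 0 ≤ v := by
    rw [hvdef, sub_nonneg, div_le_iff₀ hn0]; linarith
  have hr : ∑ i, p i ^ 3 = (∑ i, (p i - 1/n) ^ 3) + 3 * v / n + 1 / n ^ 2 := by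
    have h1 : ∀ i, p i ^ 3 = (p i - 1/n) ^ 3 + 3 / n * (p i - 1/n) ^ 2
        + 3 / n ^ 2 * (p i - 1/n) + 1 / n ^ 3 := by
      intro i; field_simp; ring
    rw [Finset.sum_congr rfl fun i _ => h1 i]
    rw [Finset.sum_add_distrib, Finset.sum_add_distrib, Finset.sum_add_distrib,
      ← Finset.mul_sum, ← Finset.mul_sum, hsum_d, hv]
    simp [Finset.card_univ]
    field_simp
    rw [Finset.sum_congr rfl fun x _ =>
      (by ring : (p x * (n:ℝ) - 1) ^ 3 / (n:ℝ) ^ 3 = ((n:ℝ) * p x - 1) ^ 3 / (n:ℝ) ^ 3)]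
  have hd3 : ∑ i, (p i - 1/n) ^ 3 ≤ v * Real.sqrt v := by
    have h1 : ∀ i ∈ univ, (p i - 1/n) ^ 3 ≤ (p i - 1/n) ^ 2 * Real.sqrt v := by
      intro i _
      have h2 : (p i - 1/n) ^ 2 ≤ v := by
        have h3 := Finset.single_le_sum (f := fun j => (p j - 1/n) ^ 2)
          (fun j _ => sq_nonneg _) (Finset.mem_univ i)
        rw [hv] at h3
        exact h3
      have hdle : p i - 1/n ≤ Real.sqrt v :=
        calc p i - 1/n ≤ |p i - 1/n| := le_abs_self _
        _ = Real.sqrt ((p i - 1/n) ^ 2) := (Real.sqrt_sq_eq_abs _).symm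
        _ ≤ Real.sqrt v := Real.sqrt_le_sqrt h2
      nlinarith [sq_nonneg (p i - 1/n)]
    calc ∑ i, (p i - 1/n) ^ 3 ≤ ∑ i, (p i - 1/n) ^ 2 * Real.sqrt v :=
          Finset.sum_le_sum h1
    _ = v * Real.sqrt v := by rw [← Finset.sum_mul, hv]
  have hone : (n:ℝ) = 1 → v = 0 := by
    intro h1
    have hq1 : (∑ i, p i ^ 2) ≤ 1 := by
      have h5 : ∀ i ∈ univ, p i ^ 2 ≤ p i * 1 := by
        intro i _
        have hple : p i ≤ 1 := by
          have h6 := Finset.single_le_sum (f := p) (fun j _ => hp0 j) (Finset.mem_univ i)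
          rw [hp1] at h6; exact h6
        nlinarith [hp0 i]
      calc (∑ i, p i ^ 2) ≤ ∑ i, p i * 1 := Finset.sum_le_sum h5
      _ = 1 := by simpa using hp1
    have : v ≤ 0 := by rw [hvdef, h1]; linarith
    linarith
  have hcast : (n:ℝ) = 1 ∨ 2 ≤ (n:ℝ) := by
    rcases Nat.lt_or_ge n 2 with h | h
    · left; have : n = 1 := by omega
      rw [this]; norm_num
    · right; exact_mod_cast h
  have hcore := birthday_claimC_core n (Real.sqrt n) v (∑ i, (p i - 1/n) ^ 3) hcast
    (by exact_mod_cast hn) (Real.sqrt_pos.mpr hn0) (Real.sq_sqrt hn0.le) hv0 hd3 hone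
  have hqv : (∑ i, p i ^ 2) = v + 1 / n := by rw [hvdef]; ring
  have hq2 : (∑ i, p i ^ 2) ^ 2 = v ^ 2 + 2 * v / n + 1 / n ^ 2 := by rw [hqv]; ring
  rw [hr]
  have hfin : (∑ i, (p i - 1/n) ^ 3) + 3 * v / n + 1 / n ^ 2 - (∑ i, p i ^ 2) ^ 2
      = (∑ i, (p i - 1/n) ^ 3) + v / n - v ^ 2 := by rw [hq2]; ring
  rw [hfin, hq2]
  exact hcore

lemma birthday_cardP (l : ℕ) :
    ((univ : Finset (Fin l × Fin l)).filter (fun s => s.1 < s.2)).card = l.choose 2 := by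
  rw [Finset.card_filter, Fintype.sum_prod_type]
  have h1 : ∀ i : Fin l, (∑ j : Fin l, if i < j then (1:ℕ) else 0) = l - 1 - i := by
    intro i
    rw [← Finset.card_filter]
    have : (univ.filter fun j => i < j) = Finset.Ioi i := by
      ext j; simp [Finset.mem_Ioi]
    rw [this]
    simp [Fin.card_Ioi]
  rw [Finset.sum_congr rfl fun i _ => h1 i]
  rw [Fin.sum_univ_eq_sum_range (fun k => l - 1 - k) l]
  rw [show (∑ k ∈ Finset.range l, (l - 1 - k)) = ∑ k ∈ Finset.range l, k from ?_]
  · rw [Finset.sum_range_id, Nat.choose_two_right]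
  · rcases Nat.eq_zero_or_pos l with h | h
    · simp [h]
    · have := Finset.sum_range_reflect (fun k => k) l
      calc ∑ k ∈ Finset.range l, (l - 1 - k)
          = ∑ k ∈ Finset.range l, (fun k => k) (l - 1 - k) := rfl
      _ = ∑ k ∈ Finset.range l, k := this

lemma birthday_countFst (l : ℕ) (i : Fin l) :
    (((univ : Finset (Fin l × Fin l)).filter (fun s => s.1 < s.2)).filter
      (fun t => t.1 = i)).card = l - 1 - i := by
  have h : ((univ : Finset (Fin l × Fin l)).filter (fun s => s.1 < s.2)).filter
      (fun t => t.1 = i) = {i} ×ˢ Finset.Ioi i := by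
    ext t
    simp only [Finset.mem_filter, Finset.mem_univ, true_and, Finset.mem_product,
      Finset.mem_singleton, Finset.mem_Ioi]
    constructor
    · rintro ⟨h1, h2⟩; exact ⟨h2, h2 ▸ h1⟩
    · rintro ⟨h1, h2⟩; exact ⟨h1 ▸ h2, h1⟩
  rw [h, Finset.card_product]
  simp [Fin.card_Ioi]

lemma birthday_countSnd (l : ℕ) (i : Fin l) :
    (((univ : Finset (Fin l × Fin l)).filter (fun s => s.1 < s.2)).filter
      (fun t => t.2 = i)).card = i := by
  have h : ((univ : Finset (Fin l × Fin l)).filter (fun s => s.1 < s.2)).filter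
      (fun t => t.2 = i) = Finset.Iio i ×ˢ {i} := by
    ext t
    simp only [Finset.mem_filter, Finset.mem_univ, true_and, Finset.mem_product,
      Finset.mem_singleton, Finset.mem_Iio]
    constructor
    · rintro ⟨h1, h2⟩; exact ⟨h2 ▸ h1, h2⟩
    · rintro ⟨h1, h2⟩; exact ⟨h2 ▸ h1, h2⟩
  rw [h, Finset.card_product]
  simp [Fin.card_Iio]

lemma birthday_countP (l : ℕ) (hl : 1 ≤ l) (i : Fin l) :
    ∑ t ∈ (univ : Finset (Fin l × Fin l)).filter (fun s => s.1 < s.2),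
      ((if t.1 = i then (1:ℝ) else 0) + (if t.2 = i then 1 else 0)) = (l:ℝ) - 1 := by
  rw [Finset.sum_add_distrib, Finset.sum_boole, Finset.sum_boole,
    birthday_countFst l i, birthday_countSnd l i]
  have hi := i.isLt
  have h2 : (l - 1 - (i:ℕ)) + (i:ℕ) = l - 1 := by omega
  calc ((l - 1 - (i:ℕ) : ℕ) : ℝ) + ((i:ℕ) : ℝ)
      = (((l - 1 - (i:ℕ)) + (i:ℕ) : ℕ) : ℝ) := by push_cast; ring
  _ = ((l - 1 : ℕ) : ℝ) := by rw [h2]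
  _ = (l:ℝ) - 1 := by
      have h3 : (1:ℕ) ≤ l := hl
      push_cast [h3]
      ring

lemma birthday_card3 {l : ℕ} (a b c d : Fin l) (hab : a < b) (hcd : c < d)
    (hne : (a, b) ≠ (c, d)) (htouch : a = c ∨ a = d ∨ b = c ∨ b = d) :
    ({a, b, c, d} : Finset (Fin l)).card = 3 := by
  rw [Finset.card_eq_three]
  rcases htouch with h | h | h | h
  · subst h
    have hbd : b ≠ d := fun h => hne (by rw [h])
    exact ⟨a, b, d, hab.ne, hcd.ne, hbd, by ext x; simp; try tauto⟩
  · subst h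
    exact ⟨a, b, c, hab.ne, hcd.ne', ((hcd.trans hab).ne).symm, by ext x; simp; try tauto⟩
  · subst h
    exact ⟨a, b, d, hab.ne, (hab.trans hcd).ne, hcd.ne, by ext x; simp; try tauto⟩
  · subst h
    have hac : a ≠ c := fun h => hne (by rw [h])
    exact ⟨a, b, c, hab.ne, hac, hcd.ne', by ext x; simp; try tauto⟩

lemma birthday_final_arith (C q r δ nR lR sn E V PP : ℝ)
    (hC : C = lR * (lR - 1) / 2)
    (hl2 : 2 ≤ lR) (hn1 : 1 ≤ nR)
    (hδ0 : 0 < δ) (hδ1 : δ ≤ 1)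
    (hfar : 1 + δ ≤ nR * q)
    (hrq : q ^ 2 ≤ r)
    (hrC : r - q ^ 2 ≤ sn / 2 * q ^ 2)
    (hE : E = C * q)
    (hV0 : 0 ≤ V)
    (hV : V ≤ C * q + (r - q ^ 2) * (C * (2 * (lR - 1))))
    (hPP : 0 < E - C * (1 / nR) * (1 + δ / 2) →
      PP ≤ V / (E - C * (1 / nR) * (1 + δ / 2)) ^ 2) :
    PP ≤ 16 / δ ^ 2 * (1 / E + 2 * sn / lR) := by
  have hn0 : (0:ℝ) < nR := by linarith
  have hq0 : 0 < q := by nlinarith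
  have hC0 : 0 < C := by rw [hC]; nlinarith
  have hE0 : 0 < E := by rw [hE]; positivity
  have hlR0 : (0:ℝ) < lR := by linarith
  obtain ⟨u, hu'⟩ : ∃ u : ℝ, u = 1 / nR := ⟨_, rfl⟩
  have hu0 : 0 < u := by rw [hu']; positivity
  have hu : nR * u = 1 := by rw [hu']; field_simp
  rw [← hu'] at hPP
  have h2 : nR * q * u = q := by
    rw [show nR * q * u = q * (nR * u) from by ring, hu, mul_one]
  have h1 : (1 + δ) * u ≤ q := by
    have h3 := mul_le_mul_of_nonneg_right hfar hu0.le
    rw [h2] at h3; exact h3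
  have hA : 0 ≤ C * q - C * ((1 + δ) * u) := by
    have := mul_le_mul_of_nonneg_left h1 hC0.le
    linarith
  have ht : E * δ / 4 ≤ E - C * u * (1 + δ / 2) := by
    rw [hE]
    nlinarith [hA, mul_nonneg hA (by linarith : (0:ℝ) ≤ δ),
      mul_nonneg (mul_nonneg hC0.le hu0.le)
        (mul_nonneg hδ0.le (by linarith : (0:ℝ) ≤ 1 - δ))]
  have ht0 : 0 < E - C * u * (1 + δ / 2) := by
    have : 0 < E * δ / 4 := by positivity
    linarith
  have hPP' := hPP ht0
  have hid : 2 * sn / lR * (C * q) ^ 2 = sn * q ^ 2 * (C * (2 * (lR - 1))) / 2 := by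
    rw [hC]; field_simp
  have hVE : V ≤ E + 2 * sn / lR * E ^ 2 := by
    have h4 : (r - q^2) * (C * (2 * (lR - 1))) ≤ sn / 2 * q ^ 2 * (C * (2 * (lR - 1))) := by
      apply mul_le_mul_of_nonneg_right hrC
      have : (0:ℝ) ≤ lR - 1 := by linarith
      positivity
    rw [hE, hid]
    nlinarith [hV, h4]
  have hstep1 : PP ≤ V / (E * δ / 4) ^ 2 := by
    refine hPP'.trans ?_
    apply div_le_div_of_nonneg_left hV0 (by positivity)
    have h5 : 0 ≤ E * δ / 4 := by positivity
    exact pow_le_pow_left₀ h5 ht 2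
  have hstep2 : V / (E * δ / 4) ^ 2 = 16 / δ ^ 2 * (V / E ^ 2) := by
    field_simp
    ring
  have hstep3 : V / E ^ 2 ≤ 1 / E + 2 * sn / lR := by
    have h6 : 1 / E + 2 * sn / lR = (E + 2 * sn / lR * E ^ 2) / E ^ 2 := by
      field_simp
    rw [h6]
    gcongr
  calc PP ≤ V / (E * δ / 4) ^ 2 := hstep1
  _ = 16 / δ ^ 2 * (V / E ^ 2) := hstep2
  _ ≤ 16 / δ ^ 2 * (1 / E + 2 * sn / lR) := by
      apply mul_le_mul_of_nonneg_left hstep3 (by positivity)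

variable {Ω : Type*} [MeasureSpace Ω] [IsProbabilityMeasure (ℙ : Measure Ω)]
variable {n l : ℕ} {p : Fin n → ℝ} {X : Fin l → Ω → Fin n}

lemma birthday_key_meas (hindep : iIndepFun X ℙ)
    (hdist : ∀ k i, ℙ {ω | X k ω = i} = ENNReal.ofReal (p i))
    (S : Finset (Fin l)) (g : Fin l → Fin n) :
    ℙ (⋂ i ∈ S, X i ⁻¹' {g i}) = ∏ i ∈ S, ENNReal.ofReal (p (g i)) := by
  rw [hindep.measure_inter_preimage_eq_mul S
    (sets := fun i => {g i}) (fun i _ => measurableSet_singleton _)]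
  exact Finset.prod_congr rfl fun i _ => hdist i (g i)

lemma birthday_measU (hp0 : ∀ i, 0 ≤ p i)
    (hmeas : ∀ k, Measurable (X k))
    (hindep : iIndepFun X ℙ)
    (hdist : ∀ k i, ℙ {ω | X k ω = i} = ENNReal.ofReal (p i))
    (S : Finset (Fin l)) (hS : S.Nonempty) :
    ℙ (⋃ x : Fin n, ⋂ i ∈ S, X i ⁻¹' {x}) = ENNReal.ofReal (∑ x, p x ^ S.card) := by
  obtain ⟨i0, hi0⟩ := hS
  rw [measure_iUnion]
  · rw [tsum_fintype]
    rw [ENNReal.ofReal_sum_of_nonneg (fun x _ => pow_nonneg (hp0 x) _)]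
    refine Finset.sum_congr rfl fun x _ => ?_
    rw [birthday_key_meas hindep hdist S (fun _ => x), Finset.prod_const,
      ← ENNReal.ofReal_pow (hp0 x)]
  · intro x y hxy
    refine Set.disjoint_left.mpr fun ω hωx hωy => ?_
    have h1 : X i0 ω = x := by
      have := Set.mem_iInter₂.mp hωx i0 hi0; simpa using this
    have h2 : X i0 ω = y := by
      have := Set.mem_iInter₂.mp hωy i0 hi0; simpa using this
    exact hxy (h1 ▸ h2 ▸ rfl)
  · intro x
    exact Finset.measurableSet_biInter S fun i _ => (hmeas i) (measurableSet_singleton x)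

lemma birthday_measUU (hp0 : ∀ i, 0 ≤ p i)
    (hmeas : ∀ k, Measurable (X k))
    (hindep : iIndepFun X ℙ)
    (hdist : ∀ k i, ℙ {ω | X k ω = i} = ENNReal.ofReal (p i))
    (S T : Finset (Fin l)) (hS : S.Nonempty) (hT : T.Nonempty) (hd : Disjoint S T) :
    ℙ ((⋃ x : Fin n, ⋂ i ∈ S, X i ⁻¹' {x}) ∩ (⋃ x : Fin n, ⋂ i ∈ T, X i ⁻¹' {x}))
      = ENNReal.ofReal (∑ x, p x ^ S.card) * ENNReal.ofReal (∑ x, p x ^ T.card) := by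
  obtain ⟨i0, hi0⟩ := hS
  obtain ⟨j0, hj0⟩ := hT
  have hrw : (⋃ x : Fin n, ⋂ i ∈ S, X i ⁻¹' {x}) ∩ (⋃ x : Fin n, ⋂ i ∈ T, X i ⁻¹' {x})
      = ⋃ z : Fin n × Fin n, ⋂ i ∈ S ∪ T, X i ⁻¹' {if i ∈ S then z.1 else z.2} := by
    ext ω
    simp only [Set.mem_inter_iff, Set.mem_iUnion, Set.mem_iInter, Set.mem_preimage,
      Set.mem_singleton_iff, Finset.mem_union]
    constructor
    · rintro ⟨⟨x, hx⟩, ⟨y, hy⟩⟩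
      refine ⟨⟨x, y⟩, fun i hi => ?_⟩
      by_cases hiS : i ∈ S
      · simp [hiS, hx i hiS]
      · rcases hi with hi | hi
        · exact absurd hi hiS
        · simp [hiS, hy i hi]
    · rintro ⟨⟨x, y⟩, hz⟩
      constructor
      · exact ⟨x, fun i hi => by simpa [hi] using hz i (Or.inl hi)⟩
      · refine ⟨y, fun i hi => ?_⟩
        have hiS : i ∉ S := fun h => (Finset.disjoint_left.mp hd h) hi
        simpa [hiS] using hz i (Or.inr hi)
  rw [hrw, measure_iUnion]
  · rw [tsum_fintype]
    have hterm : ∀ z : Fin n × Fin n,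
        ℙ (⋂ i ∈ S ∪ T, X i ⁻¹' {if i ∈ S then z.1 else z.2})
        = ENNReal.ofReal (p z.1 ^ S.card) * ENNReal.ofReal (p z.2 ^ T.card) := by
      intro z
      rw [birthday_key_meas hindep hdist (S ∪ T) (fun i => if i ∈ S then z.1 else z.2),
        Finset.prod_union hd]
      have h1 : ∏ i ∈ S, ENNReal.ofReal (p (if i ∈ S then z.1 else z.2))
          = ∏ _i ∈ S, ENNReal.ofReal (p z.1) :=
        Finset.prod_congr rfl (fun i hi => by rw [if_pos hi])
      have h2 : ∏ i ∈ T, ENNReal.ofReal (p (if i ∈ S then z.1 else z.2))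
          = ∏ _i ∈ T, ENNReal.ofReal (p z.2) :=
        Finset.prod_congr rfl (fun i hi => by
          rw [if_neg (Finset.disjoint_left.mp hd.symm hi)])
      rw [h1, h2, Finset.prod_const, Finset.prod_const,
        ← ENNReal.ofReal_pow (hp0 z.1), ← ENNReal.ofReal_pow (hp0 z.2)]
    rw [Finset.sum_congr rfl fun z _ => hterm z]
    rw [Fintype.sum_prod_type]
    rw [ENNReal.ofReal_sum_of_nonneg (fun x _ => pow_nonneg (hp0 x) _),
      ENNReal.ofReal_sum_of_nonneg (fun x _ => pow_nonneg (hp0 x) _),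
      Finset.sum_mul_sum]
  · intro z w hzw
    refine Set.disjoint_left.mpr fun ω hωz hωw => ?_
    have hj0S : j0 ∉ S := Finset.disjoint_left.mp hd.symm hj0
    have h1 : X i0 ω = z.1 := by
      have := Set.mem_iInter₂.mp hωz i0 (Finset.mem_union_left _ hi0)
      simpa [hi0] using this
    have h2 : X i0 ω = w.1 := by
      have := Set.mem_iInter₂.mp hωw i0 (Finset.mem_union_left _ hi0)
      simpa [hi0] using this
    have h3 : X j0 ω = z.2 := by
      have := Set.mem_iInter₂.mp hωz j0 (Finset.mem_union_right _ hj0)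
      simpa [hj0S] using this
    have h4 : X j0 ω = w.2 := by
      have := Set.mem_iInter₂.mp hωw j0 (Finset.mem_union_right _ hj0)
      simpa [hj0S] using this
    exact hzw (Prod.ext (h1 ▸ h2 ▸ rfl) (h3 ▸ h4 ▸ rfl))
  · intro z
    exact Finset.measurableSet_biInter _ fun i _ => (hmeas i) (measurableSet_singleton _)

lemma birthday_eventPair (a b : Fin l) (hab : a ≠ b) :
    {ω | X a ω = X b ω} = ⋃ x : Fin n, ⋂ i ∈ ({a, b} : Finset (Fin l)), X i ⁻¹' {x} := by
  ext ω
  simp only [Set.mem_setOf_eq, Set.mem_iUnion, Set.mem_iInter, Set.mem_preimage,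
    Set.mem_singleton_iff, Finset.mem_insert, Finset.mem_singleton]
  constructor
  · intro h
    exact ⟨X b ω, fun i hi => by rcases hi with h1 | h1 <;> subst h1 <;> simp [h]⟩
  · rintro ⟨x, hx⟩
    rw [hx a (Or.inl rfl), hx b (Or.inr rfl)]

lemma birthday_eventShared (a b c d : Fin l)
    (htouch : a = c ∨ a = d ∨ b = c ∨ b = d) :
    {ω | X a ω = X b ω} ∩ {ω | X c ω = X d ω}
      = ⋃ x : Fin n, ⋂ i ∈ ({a, b, c, d} : Finset (Fin l)), X i ⁻¹' {x} := by
  ext ω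
  simp only [Set.mem_inter_iff, Set.mem_setOf_eq, Set.mem_iUnion, Set.mem_iInter,
    Set.mem_preimage, Set.mem_singleton_iff, Finset.mem_insert, Finset.mem_singleton]
  constructor
  · rintro ⟨h1, h2⟩
    have hcval : X c ω = X a ω := by
      rcases htouch with h | h | h | h
      · rw [← h]
      · rw [h2, ← h]
      · rw [← h, ← h1]
      · rw [h2, ← h, ← h1]
    have hdval : X d ω = X a ω := h2.symm.trans hcval
    refine ⟨X a ω, fun i hi => ?_⟩
    rcases hi with h | h | h | h <;> subst h
    · rfl
    · exact h1.symm
    · exact hcval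
    · exact hdval
  · rintro ⟨x, hx⟩
    constructor
    · rw [hx a (by tauto), hx b (by tauto)]
    · rw [hx c (by tauto), hx d (by tauto)]

lemma birthday_measPair (hp0 : ∀ i, 0 ≤ p i)
    (hmeas : ∀ k, Measurable (X k))
    (hindep : iIndepFun X ℙ)
    (hdist : ∀ k i, ℙ {ω | X k ω = i} = ENNReal.ofReal (p i))
    (a b : Fin l) (hab : a ≠ b) :
    ℙ {ω | X a ω = X b ω} = ENNReal.ofReal (∑ x, p x ^ 2) := by
  rw [birthday_eventPair a b hab, birthday_measU hp0 hmeas hindep hdist _ ⟨a, by simp⟩]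
  congr 1
  rw [Finset.card_pair hab]

lemma birthday_measShared (hp0 : ∀ i, 0 ≤ p i)
    (hmeas : ∀ k, Measurable (X k))
    (hindep : iIndepFun X ℙ)
    (hdist : ∀ k i, ℙ {ω | X k ω = i} = ENNReal.ofReal (p i))
    (a b c d : Fin l) (hab : a < b) (hcd : c < d) (hne : (a, b) ≠ (c, d))
    (htouch : a = c ∨ a = d ∨ b = c ∨ b = d) :
    ℙ ({ω | X a ω = X b ω} ∩ {ω | X c ω = X d ω}) = ENNReal.ofReal (∑ x, p x ^ 3) := by
  rw [birthday_eventShared a b c d htouch, birthday_measU hp0 hmeas hindep hdist _ ⟨a, by simp⟩]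
  congr 1
  rw [birthday_card3 a b c d hab hcd hne htouch]

lemma birthday_measDisjoint (hp0 : ∀ i, 0 ≤ p i)
    (hmeas : ∀ k, Measurable (X k))
    (hindep : iIndepFun X ℙ)
    (hdist : ∀ k i, ℙ {ω | X k ω = i} = ENNReal.ofReal (p i))
    (a b c d : Fin l) (hab : a ≠ b) (hcd : c ≠ d)
    (h1 : a ≠ c) (h2 : a ≠ d) (h3 : b ≠ c) (h4 : b ≠ d) :
    ℙ ({ω | X a ω = X b ω} ∩ {ω | X c ω = X d ω})
      = ENNReal.ofReal (∑ x, p x ^ 2) * ENNReal.ofReal (∑ x, p x ^ 2) := by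
  have hd : Disjoint ({a, b} : Finset (Fin l)) ({c, d} : Finset (Fin l)) := by
    rw [Finset.disjoint_left]
    intro x hx hx'
    simp only [Finset.mem_insert, Finset.mem_singleton] at hx hx'
    rcases hx with rfl | rfl <;> rcases hx' with rfl | rfl <;> tauto
  rw [birthday_eventPair a b hab, birthday_eventPair c d hcd,
    birthday_measUU hp0 hmeas hindep hdist _ _ ⟨a, by simp⟩ ⟨c, by simp⟩ hd,
    Finset.card_pair hab, Finset.card_pair hcd]

lemma birthday_r_ge_qsq (hp0 : ∀ i, 0 ≤ p i) (hp1 : ∑ i, p i = 1) :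
    (∑ i, p i ^ 2) ^ 2 ≤ ∑ i, p i ^ 3 := by
  have h1 : ∀ i, p i * (p i - ∑ j, p j ^ 2) ^ 2
      = p i ^ 3 - 2 * (∑ j, p j ^ 2) * p i ^ 2 + (∑ j, p j ^ 2) ^ 2 * p i := by
    intro i; ring
  have h2 : 0 ≤ ∑ i, p i * (p i - ∑ j, p j ^ 2) ^ 2 :=
    Finset.sum_nonneg fun i _ => mul_nonneg (hp0 i) (sq_nonneg _)
  rw [Finset.sum_congr rfl fun i _ => h1 i] at h2
  rw [Finset.sum_add_distrib, Finset.sum_sub_distrib, ← Finset.mul_sum, ← Finset.mul_sum,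
    hp1, mul_one] at h2
  linarith

lemma birthday_Mbound (hp0 : ∀ i, 0 ≤ p i) (hp1 : ∑ i, p i = 1)
    (hmeas : ∀ k, Measurable (X k))
    (hindep : iIndepFun X ℙ)
    (hdist : ∀ k i, ℙ {ω | X k ω = i} = ENNReal.ofReal (p i))
    (s t : Fin l × Fin l) (hs : s.1 < s.2) (ht : t.1 < t.2) :
    (ℙ ({ω | X s.1 ω = X s.2 ω} ∩ {ω | X t.1 ω = X t.2 ω})).toReal ≤
      (∑ x, p x ^ 2) ^ 2 + (if t = s then (∑ x, p x ^ 2) else 0)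
      + ((∑ x, p x ^ 3) - (∑ x, p x ^ 2) ^ 2) *
        ((if t.1 = s.1 then (1:ℝ) else 0) + (if t.2 = s.1 then 1 else 0)
          + (if t.1 = s.2 then 1 else 0) + (if t.2 = s.2 then 1 else 0)) := by
  have hq0 : 0 ≤ ∑ x, p x ^ 2 := Finset.sum_nonneg fun x _ => sq_nonneg _
  have hrq := birthday_r_ge_qsq hp0 hp1
  have hrq' : (0:ℝ) ≤ (∑ x, p x ^ 3) - (∑ x, p x ^ 2) ^ 2 := by linarith
  have nn : ∀ a b : Fin l, (0:ℝ) ≤ (if a = b then (1:ℝ) else 0) := by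
    intro a b; split <;> norm_num
  obtain ⟨S, hS⟩ : ∃ S : ℝ, S = (if t.1 = s.1 then (1:ℝ) else 0) + (if t.2 = s.1 then 1 else 0)
      + (if t.1 = s.2 then 1 else 0) + (if t.2 = s.2 then 1 else 0) := ⟨_, rfl⟩
  rw [← hS]
  have hS0 : 0 ≤ S := by
    rw [hS]; have := nn t.1 s.1; have := nn t.2 s.1; have := nn t.1 s.2; have := nn t.2 s.2
    linarith
  by_cases hts : t = s
  · subst hts
    rw [Set.inter_self, birthday_measPair hp0 hmeas hindep hdist _ _ ht.ne,
      ENNReal.toReal_ofReal hq0, if_pos rfl]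
    linarith [mul_nonneg hrq' hS0, sq_nonneg (∑ x, p x ^ 2)]
  · rw [if_neg hts]
    by_cases htouch : s.1 = t.1 ∨ s.1 = t.2 ∨ s.2 = t.1 ∨ s.2 = t.2
    · have hr0 : 0 ≤ ∑ x, p x ^ 3 :=
        Finset.sum_nonneg fun x _ => pow_nonneg (hp0 x) _
      have hne : (s.1, s.2) ≠ (t.1, t.2) := by
        intro h
        injection h with h1 h2
        exact hts (Prod.ext h1.symm h2.symm)
      rw [birthday_measShared hp0 hmeas hindep hdist s.1 s.2 t.1 t.2 hs ht hne htouch,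
        ENNReal.toReal_ofReal hr0]
      have hge1 : (1:ℝ) ≤ S := by
        rw [hS]
        have n1 := nn t.1 s.1; have n2 := nn t.2 s.1
        have n3 := nn t.1 s.2; have n4 := nn t.2 s.2
        rcases htouch with h | h | h | h
        · rw [if_pos h.symm]; linarith
        · rw [if_pos h.symm]; linarith
        · rw [if_pos h.symm]; linarith
        · rw [if_pos h.symm]; linarith
      nlinarith [mul_le_mul_of_nonneg_left hge1 hrq']
    · push_neg at htouch
      obtain ⟨hn1, hn2, hn3, hn4⟩ := htouch
      rw [birthday_measDisjoint hp0 hmeas hindep hdist s.1 s.2 t.1 t.2 hs.ne ht.ne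
          hn1 hn2 hn3 hn4, ENNReal.toReal_mul, ENNReal.toReal_ofReal hq0]
      have hsq : (∑ x, p x ^ 2) * (∑ x, p x ^ 2) = (∑ x, p x ^ 2) ^ 2 := (sq _).symm
      linarith [mul_nonneg hrq' hS0]

end birthday_aux
theorem birthday_lower_tail_bound
    {Ω : Type*} [MeasureSpace Ω] [IsProbabilityMeasure (ℙ : Measure Ω)]
    (n l : ℕ) (hn : 1 ≤ n) (hl : 2 ≤ l)
    (δ : ℝ) (hδ0 : 0 < δ) (hδ1 : δ ≤ 1)
    (p : Fin n → ℝ) (hp0 : ∀ i, 0 ≤ p i) (hp1 : ∑ i, p i = 1)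
    (hfar : 1 + δ ≤ (n : ℝ) * ∑ i, (p i) ^ 2)
    (X : Fin l → Ω → Fin n) (hmeas : ∀ k, Measurable (X k))
    (hindep : iIndepFun X ℙ)
    (hdist : ∀ k i, ℙ {ω | X k ω = i} = ENNReal.ofReal (p i))
    (Z : Ω → ℝ)
    (hZ : Z = fun ω => ∑ i : Fin l, ∑ j : Fin l,
      if i < j ∧ X i ω = X j ω then (1 : ℝ) else 0) :
    (ℙ {ω | Z ω ≤ (l.choose 2 : ℝ) * (1 / n) * (1 + δ / 2)}).toReal ≤
      16 / δ ^ 2 * (1 / (∫ ω, Z ω) + 2 * Real.sqrt n / l) := by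
  classical
  have hl1 : 1 ≤ l := by omega
  have hq0 : (0:ℝ) ≤ ∑ x, p x ^ 2 := Finset.sum_nonneg fun x _ => sq_nonneg _
  set P : Finset (Fin l × Fin l) :=
    (univ : Finset (Fin l × Fin l)).filter (fun s => s.1 < s.2) with hPdef
  -- measurability of collision events
  have hA : ∀ i j : Fin l, MeasurableSet {ω | X i ω = X j ω} := by
    intro i j
    have h : {ω | X i ω = X j ω} = ⋃ x : Fin n, (X i ⁻¹' {x} ∩ X j ⁻¹' {x}) := by
      ext ω
      simp only [Set.mem_setOf_eq, Set.mem_iUnion, Set.mem_inter_iff, Set.mem_preimage,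
        Set.mem_singleton_iff]
      constructor
      · intro h; exact ⟨X j ω, h, rfl⟩
      · rintro ⟨x, h1, h2⟩; rw [h1, h2]
    rw [h]
    exact MeasurableSet.iUnion fun x =>
      ((hmeas i) (measurableSet_singleton x)).inter ((hmeas j) (measurableSet_singleton x))
  -- indicator representations and integrability
  have hYind : ∀ s : Fin l × Fin l, (fun ω => if X s.1 ω = X s.2 ω then (1:ℝ) else 0)
      = Set.indicator {ω | X s.1 ω = X s.2 ω} (fun _ => (1:ℝ)) := by
    intro s; funext ω; rw [Set.indicator_apply]; simp [Set.mem_setOf_eq]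
  have hYint : ∀ s : Fin l × Fin l,
      Integrable (fun ω => if X s.1 ω = X s.2 ω then (1:ℝ) else 0) ℙ := by
    intro s; rw [hYind s]; exact (integrable_const 1).indicator (hA s.1 s.2)
  have hYYind : ∀ s t : Fin l × Fin l,
      (fun ω => (if X s.1 ω = X s.2 ω then (1:ℝ) else 0)
        * (if X t.1 ω = X t.2 ω then (1:ℝ) else 0))
      = Set.indicator ({ω | X s.1 ω = X s.2 ω} ∩ {ω | X t.1 ω = X t.2 ω})
          (fun _ => (1:ℝ)) := by
    intro s t; funext ω; rw [Set.indicator_apply]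
    by_cases h1 : X s.1 ω = X s.2 ω <;> by_cases h2 : X t.1 ω = X t.2 ω <;>
      simp [h1, h2, Set.mem_inter_iff, Set.mem_setOf_eq]
  have hYYint : ∀ s t : Fin l × Fin l, Integrable
      (fun ω => (if X s.1 ω = X s.2 ω then (1:ℝ) else 0)
        * (if X t.1 ω = X t.2 ω then (1:ℝ) else 0)) ℙ := by
    intro s t; rw [hYYind s t]
    exact (integrable_const 1).indicator ((hA s.1 s.2).inter (hA t.1 t.2))
  -- Z as a sum of indicators over P
  have hZP : Z = fun ω => ∑ s ∈ P, (if X s.1 ω = X s.2 ω then (1:ℝ) else 0) := by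
    rw [hZ]; funext ω
    rw [← Fintype.sum_prod_type']
    rw [hPdef, Finset.sum_filter]
    exact Finset.sum_congr rfl fun z _ => by rw [ite_and]
  have hslt : ∀ s ∈ P, s.1 < s.2 := fun s hs => by
    rw [hPdef] at hs; exact (Finset.mem_filter.mp hs).2
  have hcard : (P.card : ℝ) = (l.choose 2 : ℝ) := by rw [hPdef, birthday_cardP l]
  -- expectation of Z
  have hintY : ∀ s ∈ P, (∫ ω, (if X s.1 ω = X s.2 ω then (1:ℝ) else 0)) = ∑ x, p x ^ 2 := by
    intro s hs
    calc (∫ ω, (if X s.1 ω = X s.2 ω then (1:ℝ) else 0))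
        = (ℙ {ω | X s.1 ω = X s.2 ω}).toReal := by
          rw [hYind s]; exact integral_indicator_one (hA s.1 s.2)
    _ = ∑ x, p x ^ 2 := by
          rw [birthday_measPair hp0 hmeas hindep hdist _ _ (hslt s hs).ne,
            ENNReal.toReal_ofReal hq0]
  have hZint : Integrable Z ℙ := by
    rw [hZP]; exact integrable_finset_sum P (fun s _ => hYint s)
  have hEcard : (∫ ω, Z ω) = (P.card : ℝ) * ∑ x, p x ^ 2 := by
    rw [hZP, integral_finset_sum P (fun s _ => hYint s),
      Finset.sum_congr rfl hintY, Finset.sum_const, nsmul_eq_mul]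
  -- second moment
  have hsqfun : (fun ω => Z ω ^ 2) = fun ω => ∑ s ∈ P, ∑ t ∈ P,
      (if X s.1 ω = X s.2 ω then (1:ℝ) else 0) * (if X t.1 ω = X t.2 ω then (1:ℝ) else 0) := by
    funext ω; rw [hZP]; dsimp only; rw [sq, Finset.sum_mul_sum]
  have hZ2int : Integrable (fun ω => Z ω ^ 2) ℙ := by
    rw [hsqfun]
    exact integrable_finset_sum _ (fun s _ => integrable_finset_sum _ (fun t _ => hYYint s t))
  have hZ2 : (∫ ω, Z ω ^ 2) = ∑ s ∈ P, ∑ t ∈ P,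
      (ℙ ({ω | X s.1 ω = X s.2 ω} ∩ {ω | X t.1 ω = X t.2 ω})).toReal := by
    rw [hsqfun, integral_finset_sum P
      (fun s _ => integrable_finset_sum P (fun t _ => hYYint s t))]
    refine Finset.sum_congr rfl fun s hs => ?_
    rw [integral_finset_sum P (fun t _ => hYYint s t)]
    refine Finset.sum_congr rfl fun t ht => ?_
    rw [hYYind s t]
    exact integral_indicator_one ((hA s.1 s.2).inter (hA t.1 t.2))
  -- second moment bound
  have hinner : ∀ s ∈ P, (∑ t ∈ P, ((∑ x, p x ^ 2) ^ 2
      + (if t = s then (∑ x, p x ^ 2) else 0)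
      + ((∑ x, p x ^ 3) - (∑ x, p x ^ 2) ^ 2) *
        ((if t.1 = s.1 then (1:ℝ) else 0) + (if t.2 = s.1 then 1 else 0)
          + (if t.1 = s.2 then 1 else 0) + (if t.2 = s.2 then 1 else 0))))
      = (P.card : ℝ) * (∑ x, p x ^ 2) ^ 2 + (∑ x, p x ^ 2)
        + ((∑ x, p x ^ 3) - (∑ x, p x ^ 2) ^ 2) * (2 * ((l:ℝ) - 1)) := by
    intro s hs
    rw [Finset.sum_add_distrib, Finset.sum_add_distrib]
    have e1 : ∑ _t ∈ P, (∑ x, p x ^ 2) ^ 2 = (P.card : ℝ) * (∑ x, p x ^ 2) ^ 2 := by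
      rw [Finset.sum_const, nsmul_eq_mul]
    have e2 : ∑ t ∈ P, (if t = s then (∑ x, p x ^ 2) else 0) = ∑ x, p x ^ 2 := by
      rw [Finset.sum_ite_eq' P s (fun _ => ∑ x, p x ^ 2), if_pos hs]
    have e3 : ∑ t ∈ P, ((∑ x, p x ^ 3) - (∑ x, p x ^ 2) ^ 2) *
        ((if t.1 = s.1 then (1:ℝ) else 0) + (if t.2 = s.1 then 1 else 0)
          + (if t.1 = s.2 then 1 else 0) + (if t.2 = s.2 then 1 else 0))
        = ((∑ x, p x ^ 3) - (∑ x, p x ^ 2) ^ 2) * (2 * ((l:ℝ) - 1)) := by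
      rw [← Finset.mul_sum]
      congr 1
      have e4 : ∀ t : Fin l × Fin l, ((if t.1 = s.1 then (1:ℝ) else 0)
          + (if t.2 = s.1 then 1 else 0) + (if t.1 = s.2 then 1 else 0)
          + (if t.2 = s.2 then 1 else 0))
          = ((if t.1 = s.1 then (1:ℝ) else 0) + (if t.2 = s.1 then 1 else 0))
            + ((if t.1 = s.2 then (1:ℝ) else 0) + (if t.2 = s.2 then 1 else 0)) := by
        intro t; ring
      rw [Finset.sum_congr rfl fun t _ => e4 t, Finset.sum_add_distrib, hPdef,
        birthday_countP l hl1 s.1, birthday_countP l hl1 s.2]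
      ring
    rw [e1, e2, e3]
  have hZ2b : (∫ ω, Z ω ^ 2) ≤ (P.card : ℝ) * ((P.card : ℝ) * (∑ x, p x ^ 2) ^ 2
      + (∑ x, p x ^ 2)
      + ((∑ x, p x ^ 3) - (∑ x, p x ^ 2) ^ 2) * (2 * ((l:ℝ) - 1))) := by
    rw [hZ2]
    calc (∑ s ∈ P, ∑ t ∈ P,
        (ℙ ({ω | X s.1 ω = X s.2 ω} ∩ {ω | X t.1 ω = X t.2 ω})).toReal)
        ≤ ∑ s ∈ P, ((P.card : ℝ) * (∑ x, p x ^ 2) ^ 2 + (∑ x, p x ^ 2)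
          + ((∑ x, p x ^ 3) - (∑ x, p x ^ 2) ^ 2) * (2 * ((l:ℝ) - 1))) := by
          refine Finset.sum_le_sum fun s hs => ?_
          rw [← hinner s hs]
          exact Finset.sum_le_sum fun t ht =>
            birthday_Mbound hp0 hp1 hmeas hindep hdist s t (hslt s hs) (hslt t ht)
    _ = (P.card : ℝ) * ((P.card : ℝ) * (∑ x, p x ^ 2) ^ 2 + (∑ x, p x ^ 2)
          + ((∑ x, p x ^ 3) - (∑ x, p x ^ 2) ^ 2) * (2 * ((l:ℝ) - 1))) := by
          rw [Finset.sum_const, nsmul_eq_mul]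
  -- variance
  have hWfun : (fun ω => (Z ω - (∫ ω', Z ω')) ^ 2)
      = fun ω => Z ω ^ 2 - (2 * (∫ ω', Z ω')) * Z ω + (∫ ω', Z ω') ^ 2 := by
    funext ω; ring
  have hWint : Integrable (fun ω => (Z ω - (∫ ω', Z ω')) ^ 2) ℙ := by
    rw [hWfun]
    exact (hZ2int.sub (hZint.const_mul _)).add (integrable_const _)
  have hW : (∫ ω, (Z ω - (∫ ω', Z ω')) ^ 2)
      = (∫ ω, Z ω ^ 2) - (∫ ω', Z ω') ^ 2 := by
    rw [hWfun]
    rw [integral_add (f := fun ω => Z ω ^ 2 - (2 * (∫ ω', Z ω')) * Z ω)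
      (g := fun _ => (∫ ω', Z ω') ^ 2)
      (hZ2int.sub (hZint.const_mul _)) (integrable_const _),
      integral_sub (f := fun ω => Z ω ^ 2) (g := fun ω => (2 * (∫ ω', Z ω')) * Z ω)
      hZ2int (hZint.const_mul _), integral_const_mul, integral_const]
    simp [measure_univ]
    ring
  have hV0 : 0 ≤ ∫ ω, (Z ω - (∫ ω', Z ω')) ^ 2 := integral_nonneg fun ω => sq_nonneg _
  -- Markov / Chebyshev
  have hMar : ∀ θ : ℝ, 0 < (∫ ω, Z ω) - θ →
      (ℙ {ω | Z ω ≤ θ}).toReal ≤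
        (∫ ω, (Z ω - (∫ ω', Z ω')) ^ 2) / ((∫ ω, Z ω) - θ) ^ 2 := by
    intro θ hθ
    have hsub : {ω | Z ω ≤ θ} ⊆
        {a | ((∫ ω, Z ω) - θ) ^ 2 ≤ (Z a - (∫ ω', Z ω')) ^ 2} := by
      intro ω hω
      simp only [Set.mem_setOf_eq] at *
      nlinarith [mul_nonneg (by linarith : (0:ℝ) ≤ θ - Z ω)
        (by linarith : (0:ℝ) ≤ 2 * (∫ ω', Z ω') - Z ω - θ)]
    have h2 := ENNReal.toReal_mono (measure_ne_top ℙ _) (measure_mono hsub)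
    have h3 := mul_meas_ge_le_integral_of_nonneg
      (ae_of_all _ (fun ω => sq_nonneg (Z ω - (∫ ω', Z ω')))) hWint
      (((∫ ω, Z ω) - θ) ^ 2)
    rw [le_div_iff₀ (by positivity)]
    calc (ℙ {ω | Z ω ≤ θ}).toReal * ((∫ ω, Z ω) - θ) ^ 2
        ≤ (ℙ {a | ((∫ ω, Z ω) - θ) ^ 2 ≤ (Z a - (∫ ω', Z ω')) ^ 2}).toReal
          * ((∫ ω, Z ω) - θ) ^ 2 := by
          apply mul_le_mul_of_nonneg_right h2 (by positivity)
    _ ≤ ∫ ω, (Z ω - (∫ ω', Z ω')) ^ 2 := by rw [mul_comm]; exact h3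
  -- assemble
  rw [hcard] at hEcard hZ2b
  refine birthday_final_arith ((l.choose 2 : ℕ) : ℝ) (∑ x, p x ^ 2) (∑ x, p x ^ 3)
    δ n l (Real.sqrt n) (∫ ω, Z ω) (∫ ω, (Z ω - (∫ ω', Z ω')) ^ 2) _
    (Nat.cast_choose_two (K := ℝ) l) (by exact_mod_cast hl) (by exact_mod_cast hn)
    hδ0 hδ1 hfar (birthday_r_ge_qsq hp0 hp1) (birthday_claimC n hn p hp0 hp1)
    hEcard hV0 ?_ ?_
  · -- variance bound
    rw [hW]
    have h4 : (∫ ω', Z ω') ^ 2 = ((l.choose 2 : ℝ)) ^ 2 * (∑ x, p x ^ 2) ^ 2 := by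
      rw [hEcard]; ring
    nlinarith [hZ2b]
  · -- Markov applied to the threshold
    intro ht0
    exact hMar ((l.choose 2 : ℝ) * (1 / n) * (1 + δ / 2)) ht0
end

section
/- Let $0 < \delta \le 1$, let $(p_1,\dots,p_n)$ be a probability vector with $n\sum_{i=1}^n p_i^2 \le 1 + \frac{\delta}{4}$, let $X_1,\dots,X_l$ be i.i.d. with law $p$, and let $Z = \sum_{1\le i<j\le l}\mathbf{1}(X_i = X_j)$. Then $\mathbf{P}\left(Z > \binom{l}{2}\frac{1}{n}\left(1 + \frac{\delta}{2}\right)\right) \le \frac{64}{\delta^2}\left(\frac{1}{\mathbf{E}(Z)} + \frac{2\sqrt{n}}{l}\right)$. -/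
open MeasureTheory ProbabilityTheory Finset

section aux
variable {Ω : Type*} [MeasureSpace Ω] [IsProbabilityMeasure (ℙ : Measure Ω)]
  {n l : ℕ} {p : Fin n → ℝ} {X : Fin l → Ω → Fin n}

lemma bday_joint (hindep : iIndepFun X ℙ)
    (hdist : ∀ k i, ℙ {ω | X k ω = i} = ENNReal.ofReal (p i))
    (S : Finset (Fin l)) (v : Fin l → Fin n) :
    ℙ (⋂ s ∈ S, {ω | X s ω = v s}) = ∏ s ∈ S, ENNReal.ofReal (p (v s)) := by
  rw [hindep.meas_biInter (fun i _ => ⟨{v i}, measurableSet_singleton _, by ext ω; simp⟩)]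
  exact Finset.prod_congr rfl fun i _ => hdist i (v i)

lemma bday_eqOn (hp0 : ∀ i, 0 ≤ p i) (hmeas : ∀ k, Measurable (X k))
    (hindep : iIndepFun X ℙ)
    (hdist : ∀ k i, ℙ {ω | X k ω = i} = ENNReal.ofReal (p i))
    (S : Finset (Fin l)) (hS : S.Nonempty) :
    ℙ (⋃ k, ⋂ s ∈ S, {ω | X s ω = k}) = ENNReal.ofReal (∑ k, p k ^ S.card) := by
  obtain ⟨i0, hi0⟩ := hS
  rw [measure_iUnion ?_ ?_]
  · rw [tsum_fintype, ENNReal.ofReal_sum_of_nonneg (fun k _ => pow_nonneg (hp0 k) _)]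
    refine Finset.sum_congr rfl fun k _ => ?_
    rw [bday_joint hindep hdist S (fun _ => k), Finset.prod_const, ENNReal.ofReal_pow (hp0 k)]
  · intro k k' hkk
    simp only [Function.onFun, Set.disjoint_left]
    intro ω hω hω'
    simp only [Set.mem_iInter] at hω hω'
    exact hkk ((hω i0 hi0).symm.trans (hω' i0 hi0))
  · intro k
    exact MeasurableSet.biInter (Set.to_countable _)
      (fun s _ => measurableSet_eq_fun (hmeas s) measurable_const)

lemma bday_pair (hp0 : ∀ i, 0 ≤ p i) (hmeas : ∀ k, Measurable (X k))
    (hindep : iIndepFun X ℙ)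
    (hdist : ∀ k i, ℙ {ω | X k ω = i} = ENNReal.ofReal (p i))
    {i j : Fin l} (hij : i ≠ j) :
    ℙ {ω | X i ω = X j ω} = ENNReal.ofReal (∑ k, p k ^ 2) := by
  have hset : {ω | X i ω = X j ω} = ⋃ k, ⋂ s ∈ ({i, j} : Finset (Fin l)), {ω | X s ω = k} := by
    ext ω
    simp only [Set.mem_setOf_eq, Set.mem_iUnion, Set.mem_iInter, Finset.mem_insert,
      Finset.mem_singleton]
    constructor
    · intro h; exact ⟨X j ω, by rintro s (rfl | rfl) <;> simp [h]⟩
    · rintro ⟨k, hk⟩; rw [hk i (Or.inl rfl), hk j (Or.inr rfl)]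
  rw [hset, bday_eqOn hp0 hmeas hindep hdist _ ⟨i, by simp⟩,
    Finset.card_insert_of_notMem (by simp [hij]), Finset.card_singleton]

lemma bday_triple (hp0 : ∀ i, 0 ≤ p i) (hmeas : ∀ k, Measurable (X k))
    (hindep : iIndepFun X ℙ)
    (hdist : ∀ k i, ℙ {ω | X k ω = i} = ENNReal.ofReal (p i))
    {i j m : Fin l} (hij : i ≠ j) (him : i ≠ m) (hjm : j ≠ m) :
    ℙ {ω | X i ω = X j ω ∧ X i ω = X m ω} = ENNReal.ofReal (∑ k, p k ^ 3) := by
  have hset : {ω | X i ω = X j ω ∧ X i ω = X m ω}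
      = ⋃ k, ⋂ s ∈ ({i, j, m} : Finset (Fin l)), {ω | X s ω = k} := by
    ext ω
    simp only [Set.mem_setOf_eq, Set.mem_iUnion, Set.mem_iInter, Finset.mem_insert,
      Finset.mem_singleton]
    constructor
    · rintro ⟨h1, h2⟩; exact ⟨X i ω, by rintro s (rfl | rfl | rfl) <;> simp [h1.symm, h2.symm]⟩
    · rintro ⟨k, hk⟩
      rw [hk i (Or.inl rfl), hk j (Or.inr (Or.inl rfl)), hk m (Or.inr (Or.inr rfl))]
      simp
  rw [hset, bday_eqOn hp0 hmeas hindep hdist _ ⟨i, by simp⟩]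
  congr 2
  rw [Finset.card_insert_of_notMem (by simp [hij, him]),
    Finset.card_insert_of_notMem (by simp [hjm]), Finset.card_singleton]

lemma bday_two_pairs (hp0 : ∀ i, 0 ≤ p i) (hmeas : ∀ k, Measurable (X k))
    (hindep : iIndepFun X ℙ)
    (hdist : ∀ k i, ℙ {ω | X k ω = i} = ENNReal.ofReal (p i))
    {i j a b : Fin l} (hij : i ≠ j) (hia : i ≠ a) (hib : i ≠ b)
    (hja : j ≠ a) (hjb : j ≠ b) (hab : a ≠ b) :
    ℙ {ω | X i ω = X j ω ∧ X a ω = X b ω}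
      = ENNReal.ofReal ((∑ k, p k ^ 2) * (∑ k, p k ^ 2)) := by
  set v : Fin n × Fin n → Fin l → Fin n :=
    fun kk s => if s = i ∨ s = j then kk.1 else kk.2 with hv
  have hvi : ∀ kk, v kk i = kk.1 := fun kk => by simp [hv]
  have hvj : ∀ kk, v kk j = kk.1 := fun kk => by simp [hv]
  have hva : ∀ kk, v kk a = kk.2 := fun kk => by simp [hv, hia.symm, hja.symm]
  have hvb : ∀ kk, v kk b = kk.2 := fun kk => by simp [hv, hib.symm, hjb.symm]
  have hset : {ω | X i ω = X j ω ∧ X a ω = X b ω}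
      = ⋃ kk : Fin n × Fin n, ⋂ s ∈ ({i, j, a, b} : Finset (Fin l)), {ω | X s ω = v kk s} := by
    ext ω
    simp only [Set.mem_setOf_eq, Set.mem_iUnion, Set.mem_iInter, Finset.mem_insert,
      Finset.mem_singleton]
    constructor
    · rintro ⟨h1, h2⟩
      refine ⟨(X i ω, X a ω), ?_⟩
      rintro s (rfl | rfl | rfl | rfl)
      · rw [hvi]
      · rw [hvj]; exact h1.symm
      · rw [hva]
      · rw [hvb]; exact h2.symm
    · rintro ⟨kk, hk⟩
      constructor
      · rw [hk i (Or.inl rfl), hk j (Or.inr (Or.inl rfl)), hvi, hvj]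
      · rw [hk a (Or.inr (Or.inr (Or.inl rfl))), hk b (Or.inr (Or.inr (Or.inr rfl))), hva, hvb]
  rw [hset, measure_iUnion ?_ ?_]
  · have hterm : ∀ kk : Fin n × Fin n,
        ℙ (⋂ s ∈ ({i, j, a, b} : Finset (Fin l)), {ω | X s ω = v kk s})
          = ENNReal.ofReal (p kk.1 ^ 2) * ENNReal.ofReal (p kk.2 ^ 2) := by
      intro kk
      rw [bday_joint hindep hdist]
      rw [Finset.prod_insert (by simp [hij, hia, hib]),
        Finset.prod_insert (by simp [hja, hjb]), Finset.prod_insert (by simp [hab]),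
        Finset.prod_singleton, hvi, hvj, hva, hvb,
        ENNReal.ofReal_pow (hp0 _), ENNReal.ofReal_pow (hp0 _)]
      ring
    rw [tsum_fintype]
    simp only [hterm]
    rw [Fintype.sum_prod_type, ENNReal.ofReal_mul (by positivity),
      ENNReal.ofReal_sum_of_nonneg (fun k _ => pow_nonneg (hp0 k) _)]
    exact (Finset.sum_mul_sum univ univ (fun k => ENNReal.ofReal (p k ^ 2)) (fun k => ENNReal.ofReal (p k ^ 2))).symm
  · intro kk kk' hkk
    simp only [Function.onFun, Set.disjoint_left]
    intro ω hω hω'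
    simp only [Set.mem_iInter] at hω hω'
    apply hkk
    have h1 := (hω i (by simp)).symm.trans (hω' i (by simp))
    have h2 := (hω a (by simp)).symm.trans (hω' a (by simp))
    rw [hvi, hvi] at h1; rw [hva, hva] at h2
    exact Prod.ext h1 h2
  · intro kk
    exact MeasurableSet.biInter (Set.to_countable _)
      (fun s _ => measurableSet_eq_fun (hmeas s) measurable_const)
end aux

set_option maxHeartbeats 1000000 in
theorem birthday_upper_tail_bound
    {Ω : Type*} [MeasureSpace Ω] [IsProbabilityMeasure (ℙ : Measure Ω)]
    (n l : ℕ) (hn : 1 ≤ n) (hl : 2 ≤ l)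
    (δ : ℝ) (hδ0 : 0 < δ) (hδ1 : δ ≤ 1)
    (p : Fin n → ℝ) (hp0 : ∀ i, 0 ≤ p i) (hp1 : ∑ i, p i = 1)
    (hclose : (n : ℝ) * ∑ i, (p i) ^ 2 ≤ 1 + δ / 4)
    (X : Fin l → Ω → Fin n) (hmeas : ∀ k, Measurable (X k))
    (hindep : iIndepFun X ℙ)
    (hdist : ∀ k i, ℙ {ω | X k ω = i} = ENNReal.ofReal (p i))
    (Z : Ω → ℝ)
    (hZ : Z = fun ω => ∑ i : Fin l, ∑ j : Fin l,
      if i < j ∧ X i ω = X j ω then (1 : ℝ) else 0) :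
    (ℙ {ω | Z ω > (l.choose 2 : ℝ) * (1 / n) * (1 + δ / 2)}).toReal ≤
      64 / δ ^ 2 * (1 / (∫ ω, Z ω) + 2 * Real.sqrt n / l) := by
  classical
  set q : ℝ := ∑ i, (p i) ^ 2 with hqdef
  set r : ℝ := ∑ i, (p i) ^ 3 with hrdef
  set C : ℝ := (l.choose 2 : ℝ) with hCdef
  -- basic positivity facts
  have hq0 : 0 ≤ q := Finset.sum_nonneg fun i _ => by positivity
  have hr0 : 0 ≤ r := Finset.sum_nonneg fun i _ => pow_nonneg (hp0 i) 3
  have hn0 : (0:ℝ) < n := by exact_mod_cast hn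
  have h2l : (2:ℝ) ≤ l := by exact_mod_cast hl
  have hl0 : (0:ℝ) < l := by linarith
  have hnq : 1 ≤ (n:ℝ) * q := by
    have := sq_sum_le_card_mul_sum_sq (s := (univ : Finset (Fin n))) (f := p)
    rw [hp1] at this
    simpa using this
  have hq_pos : 0 < q := by nlinarith
  have hnq54 : (n:ℝ) * q ≤ 5/4 := by nlinarith
  have hCval : C = (l:ℝ) * ((l:ℝ) - 1) / 2 := Nat.cast_choose_two (K := ℝ) l
  have hl1 : (1:ℝ) ≤ (l:ℝ) - 1 := by
    have : (2:ℝ) ≤ l := by exact_mod_cast hl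
    linarith
  have hC_pos : 0 < C := by rw [hCval]; nlinarith
  -- r ≤ q * sqrt q
  have hsq : Real.sqrt q ^ 2 = q := Real.sq_sqrt hq0
  have hrq : r ≤ q * Real.sqrt q := by
    have hbound : ∀ i, p i ≤ Real.sqrt q := by
      intro i
      have h1 : p i ^ 2 ≤ q := by
        refine Finset.single_le_sum (f := fun i => p i ^ 2) (fun i _ => by positivity) (mem_univ i)
      nlinarith [Real.sqrt_nonneg q, Real.sq_sqrt hq0, hp0 i,
        Real.sqrt_le_sqrt h1, Real.sqrt_sq (hp0 i)]
    calc r = ∑ i, p i * p i ^ 2 := by apply Finset.sum_congr rfl; intro i _; ring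
    _ ≤ ∑ i, Real.sqrt q * p i ^ 2 := by
        apply Finset.sum_le_sum; intro i _
        exact mul_le_mul_of_nonneg_right (hbound i) (by positivity)
    _ = q * Real.sqrt q := by rw [← Finset.mul_sum]; ring
  -- events
  set E : Fin l × Fin l → Set Ω := fun e => {ω | X e.1 ω = X e.2 ω} with hEdef
  have hE : ∀ e, MeasurableSet (E e) := fun e =>
    measurableSet_eq_fun (hmeas e.1) (hmeas e.2)
  set P : Finset (Fin l × Fin l) := univ.filter (fun e => e.1 < e.2) with hPdef
  -- Z as sum of indicators over P
  have hZP : Z = fun ω => ∑ e ∈ P, (E e).indicator (fun _ => (1:ℝ)) ω := by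
    rw [hZ]
    funext ω
    rw [hPdef, Finset.sum_filter, ← Finset.univ_product_univ, Finset.sum_product]
    refine Finset.sum_congr rfl fun i _ => Finset.sum_congr rfl fun j _ => ?_
    by_cases h1 : i < j <;> by_cases h2 : X i ω = X j ω <;>
      simp [h1, h2, Set.indicator_apply, hEdef]
  -- cardinality of P
  have hPcard : P.card = l.choose 2 := by
    have key : ∀ m : ℕ, 2 * m.choose 2 + m = m * m := by
      intro m
      induction m with
      | zero => simp
      | succ k ih =>
        rw [Nat.choose_succ_succ, Nat.choose_one_right]
        nlinarith [ih]
    have hA : P.card = ∑ i : Fin l, ∑ j : Fin l, if i < j then 1 else 0 := by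
      rw [hPdef, Finset.card_filter, ← Finset.univ_product_univ, Finset.sum_product]
    have hBA : (∑ i : Fin l, ∑ j : Fin l, if j < i then (1:ℕ) else 0)
        = ∑ i : Fin l, ∑ j : Fin l, if i < j then (1:ℕ) else 0 := Finset.sum_comm
    have hD : (∑ i : Fin l, ∑ j : Fin l, if i = j then (1:ℕ) else 0) = l := by
      simp [Finset.sum_ite_eq]
    have hsplit : (∑ i : Fin l, ∑ j : Fin l,
        ((if i < j then (1:ℕ) else 0) + ((if j < i then 1 else 0) + (if i = j then 1 else 0))))
        = l * l := by
      have h1 : ∀ i j : Fin l, ((if i < j then (1:ℕ) else 0)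
          + ((if j < i then 1 else 0) + (if i = j then 1 else 0))) = 1 := by
        intro i j
        rcases lt_trichotomy i j with h|h|h
        · simp [h, asymm h, h.ne]
        · simp [h, lt_irrefl]
        · simp [h, asymm h, h.ne']
      simp only [h1]
      simp [Finset.card_univ]
    simp only [Finset.sum_add_distrib] at hsplit
    rw [hBA, hD, ← hA] at hsplit
    have hk := key l
    obtain ⟨M, hM⟩ : ∃ M, l * l = M := ⟨_, rfl⟩
    rw [hM] at hsplit hk
    omega
  -- integrability
  have hint : ∀ e, Integrable ((E e).indicator (fun _ => (1:ℝ))) ℙ :=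
    fun e => (integrable_const (1:ℝ)).indicator (hE e)
  -- expectation of Z
  have hEe : ∀ e ∈ P, ℙ (E e) = ENNReal.ofReal q := by
    intro e he
    have : e.1 ≠ e.2 := ne_of_lt (by simpa [hPdef] using he)
    exact bday_pair hp0 hmeas hindep hdist this
  have hEZ : ∫ ω, Z ω = C * q := by
    rw [hZP, integral_finset_sum P (fun e _ => hint e)]
    have hterm : ∀ e ∈ P, ∫ ω, (E e).indicator (fun _ => (1:ℝ)) ω = q := by
      intro e he
      rw [integral_indicator_const (1:ℝ) (hE e), measureReal_def, hEe e he]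
      simp [ENNReal.toReal_ofReal hq0]
    rw [Finset.sum_congr rfl hterm, Finset.sum_const, hPcard, nsmul_eq_mul, hCdef]
  have hEZ_pos : 0 < ∫ ω, Z ω := by rw [hEZ]; positivity
  -- Z is in L²
  have hmem : MemLp Z 2 ℙ := by
    rw [hZP]
    exact memLp_finset_sum P fun e _ =>
      memLp_indicator_const 2 (hE e) (1:ℝ) (Or.inr (measure_ne_top _ _))
  -- second moment
  have hZ2 : ∫ ω, (Z ω) ^ 2 = ∑ e ∈ P, ∑ f ∈ P, (ℙ (E e ∩ E f)).toReal := by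
    have hprod : ∀ (ω : Ω), (Z ω)^2
        = ∑ e ∈ P, ∑ f ∈ P, (E e ∩ E f).indicator (fun _ => (1:ℝ)) ω := by
      intro ω
      rw [hZP]
      simp only
      rw [sq, Finset.sum_mul_sum]
      refine Finset.sum_congr rfl fun e _ => Finset.sum_congr rfl fun f _ => ?_
      by_cases h1 : ω ∈ E e <;> by_cases h2 : ω ∈ E f <;>
        simp [Set.indicator_apply, h1, h2, Set.mem_inter_iff]
    simp only [hprod]
    rw [integral_finset_sum P (fun e _ => integrable_finset_sum P
      (fun f _ => (integrable_const (1:ℝ)).indicator ((hE e).inter (hE f))))]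
    refine Finset.sum_congr rfl fun e _ => ?_
    rw [integral_finset_sum P
      (fun f _ => (integrable_const (1:ℝ)).indicator ((hE e).inter (hE f)))]
    refine Finset.sum_congr rfl fun f _ => ?_
    rw [integral_indicator_const (1:ℝ) ((hE e).inter (hE f))]
    simp [measureReal_def]
  -- variance bound
  have hmemP : ∀ f ∈ P, f.1 < f.2 := by
    intro f hf
    simpa [hPdef] using (Finset.mem_filter.mp hf).2
  have hShare : ∀ e ∈ P, ((P.filter fun f =>
      f.1 = e.1 ∨ f.1 = e.2 ∨ f.2 = e.1 ∨ f.2 = e.2).card : ℝ) ≤ 2 * ((l:ℝ) - 1) := by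
    intro e _
    have hcont : ∀ a : Fin l, (P.filter fun f => f.1 = a ∨ f.2 = a).card ≤ l - 1 := by
      intro a
      have hinj : (P.filter fun f => f.1 = a ∨ f.2 = a).card ≤ ((univ : Finset (Fin l)).erase a).card := by
        apply Finset.card_le_card_of_injOn (fun f => if f.1 = a then f.2 else f.1)
        · intro f hf
          have hfP : f.1 < f.2 := hmemP f (Finset.mem_filter.mp hf).1
          have hor : f.1 = a ∨ f.2 = a := (Finset.mem_filter.mp hf).2
          by_cases h1 : f.1 = a
          · simp only [h1, if_pos rfl]
            exact Finset.mem_erase.mpr ⟨by rw [← h1]; exact hfP.ne', Finset.mem_univ _⟩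
          · simp only [if_neg h1]
            exact Finset.mem_erase.mpr ⟨h1, Finset.mem_univ _⟩
        · intro f hf g hg hfg
          simp only [Finset.mem_coe, Finset.mem_filter] at hf hg
          have hfP : f.1 < f.2 := hmemP f hf.1
          have hgP : g.1 < g.2 := hmemP g hg.1
          by_cases h1 : f.1 = a <;> by_cases h2 : g.1 = a <;>
            simp only [h1, h2, if_pos, if_neg, if_true, if_false] at hfg
          · exact Prod.ext (h1.trans h2.symm) hfg
          · exfalso
            have hg2 : g.2 = a := hg.2.resolve_left h2
            rw [← hfg] at hgP
            rw [h1, ← hg2] at hfP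
            exact absurd (hfP.trans hgP) (lt_irrefl _)
          · exfalso
            have hf2 : f.2 = a := hf.2.resolve_left h1
            rw [hfg] at hfP
            rw [h2, ← hf2] at hgP
            exact absurd (hfP.trans hgP) (lt_irrefl _)
          · have hf2 : f.2 = a := hf.2.resolve_left h1
            have hg2 : g.2 = a := hg.2.resolve_left h2
            exact Prod.ext hfg (hf2.trans hg2.symm)
      rwa [Finset.card_erase_of_mem (Finset.mem_univ a), Finset.card_univ,
        Fintype.card_fin] at hinj
    have hsub : (P.filter fun f => f.1 = e.1 ∨ f.1 = e.2 ∨ f.2 = e.1 ∨ f.2 = e.2)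
        ⊆ (P.filter fun f => f.1 = e.1 ∨ f.2 = e.1) ∪ (P.filter fun f => f.1 = e.2 ∨ f.2 = e.2) := by
      intro f hf
      simp only [Finset.mem_filter, Finset.mem_union] at hf ⊢
      tauto
    have hnat : (P.filter fun f => f.1 = e.1 ∨ f.1 = e.2 ∨ f.2 = e.1 ∨ f.2 = e.2).card
        ≤ 2 * (l - 1) := by
      calc (P.filter fun f => f.1 = e.1 ∨ f.1 = e.2 ∨ f.2 = e.1 ∨ f.2 = e.2).card
          ≤ ((P.filter fun f => f.1 = e.1 ∨ f.2 = e.1)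
            ∪ (P.filter fun f => f.1 = e.2 ∨ f.2 = e.2)).card := Finset.card_le_card hsub
        _ ≤ (P.filter fun f => f.1 = e.1 ∨ f.2 = e.1).card
            + (P.filter fun f => f.1 = e.2 ∨ f.2 = e.2).card := Finset.card_union_le _ _
        _ ≤ (l - 1) + (l - 1) := Nat.add_le_add (hcont e.1) (hcont e.2)
        _ = 2 * (l - 1) := by ring
    calc ((P.filter fun f => f.1 = e.1 ∨ f.1 = e.2 ∨ f.2 = e.1 ∨ f.2 = e.2).card : ℝ)
        ≤ ((2 * (l - 1) : ℕ) : ℝ) := by exact_mod_cast hnat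
      _ = 2 * ((l:ℝ) - 1) := by
          have hl1n : 1 ≤ l := le_trans one_le_two hl
          push_cast [Nat.cast_sub hl1n]
          ring
  have hpair : ∀ e ∈ P, ∀ f ∈ P, (ℙ (E e ∩ E f)).toReal - q^2 ≤
      (if e = f then q else
        if (f.1 = e.1 ∨ f.1 = e.2 ∨ f.2 = e.1 ∨ f.2 = e.2) then r else 0) := by
    intro e he f hf
    have he' : e.1 < e.2 := hmemP e he
    have hf' : f.1 < f.2 := hmemP f hf
    by_cases hef : e = f
    · subst hef
      rw [if_pos rfl, Set.inter_self, hEe e he, ENNReal.toReal_ofReal hq0]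
      nlinarith [sq_nonneg q]
    · rw [if_neg hef]
      by_cases hsh : f.1 = e.1 ∨ f.1 = e.2 ∨ f.2 = e.1 ∨ f.2 = e.2
      · rw [if_pos hsh]
        have key : ℙ (E e ∩ E f) = ENNReal.ofReal r := by
          rcases hsh with h|h|h|h
          · have hne3 : e.2 ≠ f.2 := by
              intro hc
              exact hef (Prod.ext h.symm hc)
            have hset : E e ∩ E f = {ω | X e.1 ω = X e.2 ω ∧ X e.1 ω = X f.2 ω} := by
              ext ω
              simp only [hEdef, Set.mem_inter_iff, Set.mem_setOf_eq, h]
            rw [hset]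
            exact bday_triple hp0 hmeas hindep hdist he'.ne (h ▸ hf'.ne) hne3
          · have hset : E e ∩ E f = {ω | X e.2 ω = X e.1 ω ∧ X e.2 ω = X f.2 ω} := by
              ext ω
              simp only [hEdef, Set.mem_inter_iff, Set.mem_setOf_eq, h]
              exact ⟨fun ⟨h1, h2⟩ => ⟨h1.symm, h2⟩, fun ⟨h1, h2⟩ => ⟨h1.symm, h2⟩⟩
            rw [hset]
            refine bday_triple hp0 hmeas hindep hdist he'.ne' (h ▸ hf'.ne) ?_
            exact ne_of_lt (lt_trans he' (h ▸ hf'))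
          · have hset : E e ∩ E f = {ω | X e.1 ω = X e.2 ω ∧ X e.1 ω = X f.1 ω} := by
              ext ω
              simp only [hEdef, Set.mem_inter_iff, Set.mem_setOf_eq, h]
              exact ⟨fun ⟨h1, h2⟩ => ⟨h1, h2.symm⟩, fun ⟨h1, h2⟩ => ⟨h1, h2.symm⟩⟩
            rw [hset]
            refine bday_triple hp0 hmeas hindep hdist he'.ne (h ▸ hf').ne' ?_
            exact (lt_trans (h ▸ hf') he').ne'
          · have hne3 : e.1 ≠ f.1 := by
              intro hc
              exact hef (Prod.ext hc h.symm)
            have hset : E e ∩ E f = {ω | X e.2 ω = X e.1 ω ∧ X e.2 ω = X f.1 ω} := by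
              ext ω
              simp only [hEdef, Set.mem_inter_iff, Set.mem_setOf_eq, h]
              exact ⟨fun ⟨h1, h2⟩ => ⟨h1.symm, h2.symm⟩, fun ⟨h1, h2⟩ => ⟨h1.symm, h2.symm⟩⟩
            rw [hset]
            exact bday_triple hp0 hmeas hindep hdist he'.ne' (h ▸ hf').ne' hne3
        rw [key, ENNReal.toReal_ofReal hr0]
        nlinarith [sq_nonneg q]
      · rw [if_neg hsh]
        push_neg at hsh
        obtain ⟨h1, h2, h3, h4⟩ := hsh
        have hset : E e ∩ E f = {ω | X e.1 ω = X e.2 ω ∧ X f.1 ω = X f.2 ω} := by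
          ext ω
          simp only [hEdef, Set.mem_inter_iff, Set.mem_setOf_eq]
        have key : ℙ (E e ∩ E f) = ENNReal.ofReal (q * q) := by
          rw [hset]
          exact bday_two_pairs hp0 hmeas hindep hdist he'.ne h1.symm h3.symm h2.symm h4.symm hf'.ne
        rw [key, ENNReal.toReal_ofReal (by positivity)]
        nlinarith []
  have hVar : Var[Z] ≤ C * q + C * (2 * ((l:ℝ) - 1)) * r := by
    have hVarEq : Var[Z] = ∑ e ∈ P, ∑ f ∈ P, ((ℙ (E e ∩ E f)).toReal - q^2) := by
      have h0 : Var[Z] = (∫ ω, (Z ω)^2) - (∫ ω, Z ω)^2 := by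
        rw [variance_eq_sub hmem]
        rfl
      rw [h0, hZ2, hEZ]
      simp only [Finset.sum_sub_distrib]
      rw [Finset.sum_const, Finset.sum_const, hPcard]
      rw [nsmul_eq_mul, nsmul_eq_mul]
      rw [hCdef]
      ring
    rw [hVarEq]
    calc (∑ e ∈ P, ∑ f ∈ P, ((ℙ (E e ∩ E f)).toReal - q^2))
        ≤ ∑ e ∈ P, ∑ f ∈ P, (if e = f then q else
            if (f.1 = e.1 ∨ f.1 = e.2 ∨ f.2 = e.1 ∨ f.2 = e.2) then r else 0) :=
          Finset.sum_le_sum fun e he => Finset.sum_le_sum fun f hf => hpair e he f hf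
      _ ≤ ∑ _e ∈ P, (q + (2 * ((l:ℝ) - 1)) * r) := by
          refine Finset.sum_le_sum fun e he => ?_
          have hsplit2 : ∀ f : Fin l × Fin l, (if e = f then q else
              if (f.1 = e.1 ∨ f.1 = e.2 ∨ f.2 = e.1 ∨ f.2 = e.2) then r else 0)
              ≤ (if e = f then q else 0)
                + (if (f.1 = e.1 ∨ f.1 = e.2 ∨ f.2 = e.1 ∨ f.2 = e.2) then r else 0) := by
            intro f
            by_cases hef : e = f <;> by_cases hsh : (f.1 = e.1 ∨ f.1 = e.2 ∨ f.2 = e.1 ∨ f.2 = e.2) <;>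
              simp [hef, hsh] <;> linarith
          calc (∑ f ∈ P, (if e = f then q else
              if (f.1 = e.1 ∨ f.1 = e.2 ∨ f.2 = e.1 ∨ f.2 = e.2) then r else 0))
              ≤ ∑ f ∈ P, ((if e = f then q else 0)
                + (if (f.1 = e.1 ∨ f.1 = e.2 ∨ f.2 = e.1 ∨ f.2 = e.2) then r else 0)) :=
                Finset.sum_le_sum fun f _ => hsplit2 f
            _ = (∑ f ∈ P, if e = f then q else 0)
                + ∑ f ∈ P, (if (f.1 = e.1 ∨ f.1 = e.2 ∨ f.2 = e.1 ∨ f.2 = e.2) then r else 0) :=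
                Finset.sum_add_distrib
            _ ≤ q + (2 * ((l:ℝ) - 1)) * r := by
                have e1 : (∑ f ∈ P, if e = f then q else 0) = q := by
                  rw [Finset.sum_ite_eq P e (fun _ => q), if_pos he]
                have e2 : (∑ f ∈ P, (if (f.1 = e.1 ∨ f.1 = e.2 ∨ f.2 = e.1 ∨ f.2 = e.2)
                    then r else 0))
                    = ((P.filter fun f => f.1 = e.1 ∨ f.1 = e.2 ∨ f.2 = e.1 ∨ f.2 = e.2).card : ℝ) * r := by
                  rw [← Finset.sum_filter, Finset.sum_const, nsmul_eq_mul]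
                rw [e1, e2]
                have := hShare e he
                nlinarith [hShare e he, hr0]
      _ = C * q + C * (2 * ((l:ℝ) - 1)) * r := by
          rw [Finset.sum_const, hPcard, nsmul_eq_mul, hCdef]
          ring
  -- Chebyshev
  clear_value q r C
  set c : ℝ := C * δ / (4 * n) with hcdef
  clear_value c
  have hc : 0 < c := by
    rw [hcdef]
    exact div_pos (mul_pos hC_pos hδ0) (by positivity)
  have hsubset : {ω | Z ω > C * (1 / n) * (1 + δ / 2)} ⊆ {ω | c ≤ |Z ω - ∫ x, Z x|} := by
    intro ω hω
    simp only [Set.mem_setOf_eq] at hω ⊢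
    have hgap : c ≤ Z ω - ∫ x, Z x := by
      rw [hEZ, hcdef]
      have h1 : C * q ≤ C * (1 + δ / 4) / n := by
        rw [le_div_iff₀ hn0]
        calc C * q * n = C * ((n:ℝ) * q) := by ring
          _ ≤ C * (1 + δ / 4) := by nlinarith [hclose]
      have h2 : C * (1 / n) * (1 + δ / 2) - C * (1 + δ / 4) / n = C * δ / (4 * n) := by
        field_simp
        ring
      linarith [hω]
    exact hgap.trans (le_abs_self _)
  have hcheb := meas_ge_le_variance_div_sq (μ := ℙ) hmem hc
  have hmono : ℙ {ω | Z ω > C * (1 / n) * (1 + δ / 2)}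
      ≤ ENNReal.ofReal (Var[Z] / c ^ 2) := le_trans (measure_mono hsubset) hcheb
  have hstep : (ℙ {ω | Z ω > C * (1 / n) * (1 + δ / 2)}).toReal ≤ Var[Z] / c ^ 2 := by
    have := ENNReal.toReal_mono ENNReal.ofReal_ne_top hmono
    rwa [ENNReal.toReal_ofReal (div_nonneg (variance_nonneg Z ℙ) (by positivity))] at this
  refine hstep.trans ?_
  rw [hEZ]
  clear hZ2 hpair hShare hmemP hsubset hcheb hmono hstep hint hEe hE hZP hZ hdist hindep hmeas
  clear hEZ hEZ_pos hmem hPcard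
  rw [div_le_iff₀ (pow_pos hc 2)]
  have hkey : (n:ℝ)^2 * q * Real.sqrt q ≤ 2 * Real.sqrt n := by
    have hsn : Real.sqrt n ^ 2 = n := Real.sq_sqrt hn0.le
    have h1 : ((n:ℝ)^2 * q * Real.sqrt q)^2 ≤ (2 * Real.sqrt n)^2 := by
      have e1 : ((n:ℝ)^2 * q * Real.sqrt q)^2 = (n:ℝ) * ((n:ℝ) * q)^3 := by
        rw [mul_pow, mul_pow, hsq]
        ring
      have e2 : (2 * Real.sqrt n)^2 = 4 * n := by
        rw [mul_pow, hsn]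
        ring
      rw [e1, e2]
      have hcube : ((n:ℝ) * q)^3 ≤ 4 := by
        have := pow_le_pow_left₀ (by linarith : (0:ℝ) ≤ (n:ℝ) * q) hnq54 3
        nlinarith [this]
      nlinarith [mul_nonneg hn0.le (sub_nonneg.mpr hcube)]
    have ha : 0 ≤ (n:ℝ)^2 * q * Real.sqrt q :=
      mul_nonneg (mul_nonneg (by positivity) hq_pos.le) (Real.sqrt_nonneg q)
    have hb : 0 < Real.sqrt n := Real.sqrt_pos.mpr hn0
    nlinarith [h1]
  have hcoef : 0 ≤ C * (2 * ((l:ℝ) - 1)) := by nlinarith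
  have hVar' : Var[Z] ≤ C * q + C * (2 * ((l:ℝ) - 1)) * (q * Real.sqrt q) := by
    have := mul_le_mul_of_nonneg_left hrq hcoef
    linarith [hVar]
  have hT1 : C * q ≤ 4 * C / ((n:ℝ)^2 * q) := by
    rw [le_div_iff₀ (mul_pos (by positivity) hq_pos)]
    have h5 : ((n:ℝ) * q) * ((n:ℝ) * q) ≤ 4 := by
      have : ((n:ℝ) * q) * ((n:ℝ) * q) ≤ (5/4) * (5/4) :=
        mul_le_mul hnq54 hnq54 (by linarith) (by norm_num)
      linarith
    have h6 := mul_le_mul_of_nonneg_left h5 hC_pos.le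
    calc C * q * ((n:ℝ)^2 * q) = C * (((n:ℝ) * q) * ((n:ℝ) * q)) := by ring
      _ ≤ C * 4 := h6
      _ = 4 * C := by ring
  have hT2 : C * (2 * ((l:ℝ) - 1)) * (q * Real.sqrt q)
      ≤ 8 * C^2 * Real.sqrt n / ((n:ℝ)^2 * (l:ℝ)) := by
    rw [le_div_iff₀ (mul_pos (by positivity) hl0)]
    have h3 : 0 ≤ 2 * C * ((l:ℝ) - 1) * l :=
      mul_nonneg (mul_nonneg (mul_nonneg (by norm_num) hC_pos.le) (by linarith)) hl0.le
    have h4 := mul_le_mul_of_nonneg_left hkey h3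
    calc C * (2 * ((l:ℝ) - 1)) * (q * Real.sqrt q) * ((n:ℝ)^2 * l)
        = 2 * C * ((l:ℝ) - 1) * l * ((n:ℝ)^2 * q * Real.sqrt q) := by ring
      _ ≤ 2 * C * ((l:ℝ) - 1) * l * (2 * Real.sqrt n) := h4
      _ = 8 * C^2 * Real.sqrt n := by
          rw [hCval]
          ring
  have hRHS : (64 / δ ^ 2 * (1 / (C * q) + 2 * Real.sqrt n / l)) * c ^ 2
      = 4 * C / ((n:ℝ)^2 * q) + 8 * C^2 * Real.sqrt n / ((n:ℝ)^2 * (l:ℝ)) := by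
    rw [hcdef]
    field_simp
    ring
  rw [hRHS]
  linarith [hVar', hT1, hT2]
end

section
/- Let $0 < \delta \le 1$, let $(p_1,\dots,p_n)$ be a probability vector, let $X_1,\dots,X_l$ be i.i.d. with law $p$, and let $Z = \sum_{1\le i<j\le l}\mathbf{1}(X_i = X_j)$. Suppose that $\frac{1}{\mathbf{E}(Z)} \le \frac{\delta^2}{512}$, that $\frac{2\sqrt{n}}{l} \le \frac{\delta^2}{512}$, and that $n\sum_{i=1}^n p_i^2 \le 1 + \frac{\delta}{4}$. Then $\mathbf{P}\left(Z > \binom{l}{2}\frac{1}{n}\left(1 + \frac{\delta}{2}\right)\right) \le \frac{1}{4}$. -/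
set_option maxHeartbeats 1000000

open MeasureTheory ProbabilityTheory Finset

section BirthdayAux

/-! ### Arithmetic lemma -/

lemma birthday_arith_final (nr L δ s q N V : ℝ) (hn1 : 1 ≤ nr) (hL : 2 ≤ L)
    (hδ0 : 0 < δ) (hδ1 : δ ≤ 1) (hs1 : 1 ≤ nr * s) (hns : nr * s ≤ 5/4)
    (hq0 : 0 ≤ q) (hqs : q ≤ s * Real.sqrt s)
    (hN : 2 * N = L * (L - 1)) (h1 : 1 / (N * s) ≤ δ^2 / 512)
    (h2 : 2 * Real.sqrt nr / L ≤ δ^2 / 512)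
    (hV : V ≤ N * s + L * (L - 1) * (L - 2) * q) :
    V / (N * δ / (4 * nr))^2 ≤ 1 / 4 := by
  obtain ⟨sn, hsnn, rfl⟩ : ∃ sn, 0 ≤ sn ∧ nr = sn^2 :=
    ⟨Real.sqrt nr, Real.sqrt_nonneg _, (Real.sq_sqrt (by linarith)).symm⟩
  rw [Real.sqrt_sq hsnn] at h2
  have hsn1 : 1 ≤ sn := by nlinarith
  have hsn0 : 0 < sn := by linarith
  have hN1 : 1 ≤ N := by nlinarith
  have hs0 : 0 < s := by nlinarith
  have hsle : s ≤ 5 / (4 * sn^2) := by rw [le_div_iff₀ (by positivity)]; linarith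
  have hss : Real.sqrt s ≤ 9 / (8 * sn) := by
    have h9 : s ≤ (9 / (8 * sn))^2 := by
      have he : (9 / (8 * sn))^2 = 81 / (64 * sn^2) := by
        rw [div_pow, mul_pow]; norm_num
      rw [he]
      refine hsle.trans ?_
      rw [div_le_div_iff₀ (by positivity) (by positivity)]; nlinarith
    calc Real.sqrt s ≤ Real.sqrt ((9 / (8 * sn))^2) := Real.sqrt_le_sqrt h9
      _ = 9 / (8 * sn) := Real.sqrt_sq (by positivity)
  have hq : q ≤ 45 / (32 * sn^3) := by
    calc q ≤ s * Real.sqrt s := hqs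
      _ ≤ (5 / (4 * sn^2)) * (9 / (8 * sn)) :=
        mul_le_mul hsle hss (Real.sqrt_nonneg s) (by positivity)
      _ = 45 / (32 * sn^3) := by field_simp; ring
  have h512 : 512 ≤ N * s * δ^2 := by
    rw [div_le_div_iff₀ (by positivity) (by positivity)] at h1
    nlinarith
  have t1 : N * s ≤ 25 * N^2 * δ^2 / (8192 * sn^4) := by
    have a1 : N * s ≤ (N * s)^2 * δ^2 / 512 := by
      rw [le_div_iff₀ (by norm_num)]
      nlinarith [mul_pos (by positivity : (0:ℝ) < N) hs0]
    have a2 : (N * s)^2 ≤ N^2 * (25 / (16 * sn^4)) := by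
      have h5 : (5 / (4 * sn^2))^2 = 25 / (16 * sn^4) := by
        rw [div_pow, mul_pow, ← pow_mul]; norm_num
      rw [mul_pow, ← h5]
      exact mul_le_mul_of_nonneg_left (pow_le_pow_left₀ hs0.le hsle 2) (sq_nonneg N)
    calc N * s ≤ (N * s)^2 * δ^2 / 512 := a1
      _ ≤ N^2 * (25 / (16 * sn^4)) * δ^2 / 512 := by gcongr
      _ = 25 * N^2 * δ^2 / (8192 * sn^4) := by field_simp; ring
  have hL2 : 1 / L ≤ δ^2 / (1024 * sn) := by
    rw [div_le_div_iff₀ (by linarith) (by positivity)]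
    rw [div_le_div_iff₀ (by linarith) (by norm_num)] at h2
    nlinarith
  have t2 : L * (L - 1) * (L - 2) * q ≤ 45 * N^2 * δ^2 / (8192 * sn^4) := by
    have b0 : L * (L - 1) * (L - 2) * q ≤ L * (L - 1)^2 * q := by nlinarith
    have b1 : L * (L - 1)^2 = 4 * N^2 * (1 / L) := by
      field_simp; nlinarith [hN]
    have b2 : 4 * N^2 * (1/L) * q ≤ 4 * N^2 * (δ^2 / (1024 * sn)) * q := by
      have hnn : (0:ℝ) ≤ 4 * N^2 * q := by positivity
      nlinarith [hL2]
    have b3 : 4 * N^2 * (δ^2 / (1024 * sn)) * q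
        ≤ 4 * N^2 * (δ^2 / (1024 * sn)) * (45 / (32 * sn^3)) :=
      mul_le_mul_of_nonneg_left hq (by positivity)
    have b4 : 4 * N^2 * (δ^2 / (1024 * sn)) * (45 / (32 * sn^3))
        = 45 * N^2 * δ^2 / (8192 * sn^4) := by
      field_simp; ring
    calc L * (L - 1) * (L - 2) * q ≤ L * (L-1)^2 * q := b0
      _ = 4 * N^2 * (1/L) * q := by rw [b1]
      _ ≤ 4 * N^2 * (δ^2 / (1024 * sn)) * q := b2
      _ ≤ _ := b3
      _ = _ := b4
  have hc2 : (N * δ / (4 * sn^2))^2 = 512 * (N^2 * δ^2 / (8192 * sn^4)) := by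
    rw [div_pow, mul_pow, mul_pow, ← pow_mul]; norm_num; ring
  have hA : (0:ℝ) ≤ N^2 * δ^2 / (8192 * sn^4) := by positivity
  rw [hc2, div_le_div_iff₀ (by positivity) (by norm_num)]
  have e25 : 25 * N^2 * δ^2 / (8192 * sn^4) = 25 * (N^2 * δ^2 / (8192 * sn^4)) := by ring
  have e45 : 45 * N^2 * δ^2 / (8192 * sn^4) = 45 * (N^2 * δ^2 / (8192 * sn^4)) := by ring
  rw [e25] at t1; rw [e45] at t2
  linarith

/-! ### Counting lemmas -/

lemma birthday_card_pairsF (l : ℕ) :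
    ((univ : Finset (Fin l × Fin l)).filter (fun r => r.1 < r.2)).card = l.choose 2 := by
  rw [Finset.card_filter, Fintype.sum_prod_type, Finset.sum_comm]
  have h1 : ∀ j : Fin l, (∑ i : Fin l, if i < j then (1:ℕ) else 0) = (j : ℕ) := by
    intro j
    rw [← Finset.card_filter]
    have : (univ : Finset (Fin l)).filter (fun i => i < j) = Finset.Iio j := by
      ext i; simp
    rw [this, Fin.card_Iio]
  simp_rw [h1]
  rw [Fin.sum_univ_eq_sum_range (fun i => i) l, Finset.sum_range_id, Nat.choose_two_right]

lemma birthday_card_triples (l : ℕ) :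
    ((univ : Finset (Fin l × Fin l × Fin l)).filter
      (fun t => t.1 ≠ t.2.1 ∧ t.1 ≠ t.2.2 ∧ t.2.1 ≠ t.2.2)).card ≤ l * (l - 1) * (l - 2) := by
  rw [Finset.card_filter, Fintype.sum_prod_type]
  have key : ∀ x y : Fin l, x ≠ y →
      (∑ z : Fin l, if x ≠ z ∧ y ≠ z then (1:ℕ) else 0) = l - 2 := by
    intro x y hxy
    rw [← Finset.card_filter]
    have h2 : (univ : Finset (Fin l)).filter (fun z => x ≠ z ∧ y ≠ z) = univ \ {x, y} := by
      ext z; simp [ne_comm, and_comm]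
    rw [h2, Finset.card_sdiff_of_subset (Finset.subset_univ _), Finset.card_univ, Fintype.card_fin,
      Finset.card_pair hxy]
  have step : ∀ x : Fin l, (∑ yz : Fin l × Fin l,
      if x ≠ yz.1 ∧ x ≠ yz.2 ∧ yz.1 ≠ yz.2 then (1:ℕ) else 0) ≤ (l - 1) * (l - 2) := by
    intro x
    rw [Fintype.sum_prod_type]
    have h3 : ∀ y : Fin l, (∑ z : Fin l, if x ≠ y ∧ x ≠ z ∧ y ≠ z then (1:ℕ) else 0)
        = if x ≠ y then (l - 2) else 0 := by
      intro y
      by_cases hxy : x = y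
      · simp [hxy]
      · rw [if_pos hxy, ← key x y hxy]
        exact Finset.sum_congr rfl fun z _ => by simp [hxy]
    simp_rw [h3]
    rw [Finset.sum_ite, Finset.sum_const, Finset.sum_const, smul_eq_mul, smul_eq_mul,
      mul_zero, add_zero]
    have h4 : (univ.filter (fun y => x ≠ y)).card ≤ l - 1 := by
      have : (univ : Finset (Fin l)).filter (fun y => x ≠ y) = univ.erase x := by
        ext y; simp [ne_comm]
      rw [this, Finset.card_erase_of_mem (Finset.mem_univ x), Finset.card_univ,
        Fintype.card_fin]
    exact Nat.mul_le_mul_right _ h4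
  calc (∑ x : Fin l, ∑ yz : Fin l × Fin l,
      if x ≠ yz.1 ∧ x ≠ yz.2 ∧ yz.1 ≠ yz.2 then (1:ℕ) else 0)
      ≤ ∑ _x : Fin l, (l - 1) * (l - 2) := Finset.sum_le_sum fun x _ => step x
    _ = l * ((l - 1) * (l - 2)) := by rw [Finset.sum_const, Finset.card_univ,
        Fintype.card_fin, smul_eq_mul]
    _ = l * (l - 1) * (l - 2) := by ring

private def birthdayPhi {l : ℕ} (r : (Fin l × Fin l) × (Fin l × Fin l)) :
    Fin l × Fin l × Fin l :=
  let i := r.1.1; let j := r.1.2; let k := r.2.1; let m := r.2.2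
  let x := if i = k ∨ i = m then i else j
  (x, if i = k ∨ i = m then j else i, if x = k then m else k)

private def birthdayUnphi {l : ℕ} (t : Fin l × Fin l × Fin l) :
    (Fin l × Fin l) × (Fin l × Fin l) :=
  ((if t.1 < t.2.1 then t.1 else t.2.1, if t.1 < t.2.1 then t.2.1 else t.1),
   (if t.1 < t.2.2 then t.1 else t.2.2, if t.1 < t.2.2 then t.2.2 else t.1))

private lemma birthdayPhi_spec {l : ℕ} (r : (Fin l × Fin l) × (Fin l × Fin l))
    (hij : r.1.1 < r.1.2) (hkm : r.2.1 < r.2.2) (hne : r.1 ≠ r.2)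
    (hsh : r.1.1 = r.2.1 ∨ r.1.1 = r.2.2 ∨ r.1.2 = r.2.1 ∨ r.1.2 = r.2.2) :
    ((birthdayPhi r).1 ≠ (birthdayPhi r).2.1 ∧ (birthdayPhi r).1 ≠ (birthdayPhi r).2.2 ∧
      (birthdayPhi r).2.1 ≠ (birthdayPhi r).2.2)
      ∧ birthdayUnphi (birthdayPhi r) = r := by
  obtain ⟨⟨i, j⟩, ⟨k, m⟩⟩ := r
  simp only [birthdayPhi, birthdayUnphi, Prod.mk.injEq, ne_eq, Fin.ext_iff, Fin.lt_def] at *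
  split_ifs at * <;> omega

lemma birthday_card_T_le (l : ℕ)
    (pairsF : Finset (Fin l × Fin l))
    (hpairs : pairsF = (univ : Finset (Fin l × Fin l)).filter (fun r => r.1 < r.2)) :
    (((pairsF ×ˢ pairsF).filter (fun r => r.1 ≠ r.2 ∧
      (r.1.1 = r.2.1 ∨ r.1.1 = r.2.2 ∨ r.1.2 = r.2.1 ∨ r.1.2 = r.2.2))).card : ℕ)
      ≤ l * (l - 1) * (l - 2) := by
  have hsub : ∀ r ∈ (pairsF ×ˢ pairsF).filter (fun r => r.1 ≠ r.2 ∧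
      (r.1.1 = r.2.1 ∨ r.1.1 = r.2.2 ∨ r.1.2 = r.2.1 ∨ r.1.2 = r.2.2)),
      (r.1.1 < r.1.2 ∧ r.2.1 < r.2.2) ∧ r.1 ≠ r.2 ∧
      (r.1.1 = r.2.1 ∨ r.1.1 = r.2.2 ∨ r.1.2 = r.2.1 ∨ r.1.2 = r.2.2) := by
    intro r hr
    rw [Finset.mem_filter, Finset.mem_product, hpairs] at hr
    simp only [Finset.mem_filter, Finset.mem_univ, true_and] at hr
    exact ⟨⟨hr.1.1, hr.1.2⟩, hr.2⟩
  refine le_trans (Finset.card_le_card_of_injOn birthdayPhi ?_ ?_) (birthday_card_triples l)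
  · intro r hr
    obtain ⟨⟨h1, h2⟩, h3, h4⟩ := hsub r hr
    simp only [Finset.mem_coe, Finset.mem_filter, Finset.mem_univ, true_and]
    exact (birthdayPhi_spec r h1 h2 h3 h4).1
  · intro r hr r' hr' heq
    obtain ⟨⟨h1, h2⟩, h3, h4⟩ := hsub r hr
    obtain ⟨⟨h1', h2'⟩, h3', h4'⟩ := hsub r' hr'
    rw [← (birthdayPhi_spec r h1 h2 h3 h4).2, ← (birthdayPhi_spec r' h1' h2' h3' h4').2, heq]

lemma birthday_card3_s13 {l : ℕ} {i j k m : Fin l} (hij : i < j) (hkm : k < m)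
    (hne : ¬(i = k ∧ j = m)) (hsh : i = k ∨ i = m ∨ j = k ∨ j = m) :
    ({i, j, k, m} : Finset (Fin l)).card = 3 := by
  have hcard : ∀ x y z : Fin l, x ≠ y → x ≠ z → y ≠ z →
      ({x, y, z} : Finset (Fin l)).card = 3 := by
    intro x y z h1 h2 h3
    rw [Finset.card_insert_of_notMem (by simp [h1, h2]),
      Finset.card_insert_of_notMem (by simp [h3]), Finset.card_singleton]
  rcases hsh with rfl | rfl | rfl | rfl
  · have he : ({i, j, i, m} : Finset (Fin l)) = {i, j, m} := by ext x; simp <;> tauto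
    rw [he]
    exact hcard i j m hij.ne hkm.ne (fun h => hne ⟨rfl, h⟩)
  · have he : ({i, j, k, i} : Finset (Fin l)) = {i, j, k} := by ext x; simp <;> tauto
    rw [he]
    exact hcard i j k hij.ne hkm.ne' (hkm.trans hij).ne'
  · have he : ({i, j, j, m} : Finset (Fin l)) = {i, j, m} := by ext x; simp <;> tauto
    rw [he]
    exact hcard i j m hij.ne (hij.trans hkm).ne hkm.ne
  · have he : ({i, j, k, j} : Finset (Fin l)) = {i, j, k} := by ext x; simp <;> tauto
    rw [he]
    exact hcard i j k hij.ne (fun h => hne ⟨h, rfl⟩) hkm.ne'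

/-! ### Probability computations -/

variable {Ω : Type*} [MeasureSpace Ω] [IsProbabilityMeasure (ℙ : Measure Ω)]
variable {n l : ℕ} {p : Fin n → ℝ} {X : Fin l → Ω → Fin n}

omit [IsProbabilityMeasure (ℙ : Measure Ω)] in
lemma birthday_aux_prod (hindep : iIndepFun X ℙ)
    (hdist : ∀ k i, ℙ {ω | X k ω = i} = ENNReal.ofReal (p i))
    (t : Finset (Fin l)) (v : Fin l → Fin n) :
    ℙ (⋂ k ∈ t, X k ⁻¹' {v k}) = ∏ k ∈ t, ENNReal.ofReal (p (v k)) := by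
  rw [hindep.meas_biInter (fun k _ => ⟨{v k}, measurableSet_singleton _, rfl⟩)]
  exact Finset.prod_congr rfl fun k _ => hdist k (v k)

omit [IsProbabilityMeasure (ℙ : Measure Ω)] in
lemma birthday_meas_AA (hmeas : ∀ k, Measurable (X k)) (i j k m : Fin l) :
    ℙ ({ω | X i ω = X j ω} ∩ {ω | X k ω = X m ω}) =
      ∑ a : Fin n, ∑ b : Fin n,
        ℙ (X i ⁻¹' {a} ∩ X j ⁻¹' {a} ∩ (X k ⁻¹' {b} ∩ X m ⁻¹' {b})) := by
  have hset : {ω | X i ω = X j ω} ∩ {ω | X k ω = X m ω} =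
      ⋃ ab : Fin n × Fin n,
        (X i ⁻¹' {ab.1} ∩ X j ⁻¹' {ab.1} ∩ (X k ⁻¹' {ab.2} ∩ X m ⁻¹' {ab.2})) := by
    ext ω
    simp only [Set.mem_inter_iff, Set.mem_setOf_eq, Set.mem_iUnion, Set.mem_preimage,
      Set.mem_singleton_iff]
    constructor
    · rintro ⟨h1, h2⟩
      exact ⟨(X j ω, X m ω), ⟨⟨h1, rfl⟩, h2, rfl⟩⟩
    · rintro ⟨ab, ⟨⟨ha1, ha2⟩, hb1, hb2⟩⟩
      exact ⟨ha1.trans ha2.symm, hb1.trans hb2.symm⟩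
  rw [hset, measure_iUnion, tsum_fintype, Fintype.sum_prod_type]
  · intro ab cd hne
    rw [Function.onFun, Set.disjoint_left]
    rintro ω ⟨⟨ha1, -⟩, hb1, -⟩ ⟨⟨hc1, -⟩, hd1, -⟩
    simp only [Set.mem_preimage, Set.mem_singleton_iff] at *
    exact hne (Prod.ext (ha1.symm.trans hc1) (hb1.symm.trans hd1))
  · intro ab
    exact (((hmeas i) (measurableSet_singleton _)).inter
      ((hmeas j) (measurableSet_singleton _))).inter
      (((hmeas k) (measurableSet_singleton _)).inter ((hmeas m) (measurableSet_singleton _)))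

omit [IsProbabilityMeasure (ℙ : Measure Ω)] in
lemma birthday_block_const (hindep : iIndepFun X ℙ)
    (hdist : ∀ k i, ℙ {ω | X k ω = i} = ENNReal.ofReal (p i)) (hp0 : ∀ i, 0 ≤ p i)
    (i j k m : Fin l) (a : Fin n) :
    ℙ (X i ⁻¹' {a} ∩ X j ⁻¹' {a} ∩ (X k ⁻¹' {a} ∩ X m ⁻¹' {a})) =
      ENNReal.ofReal (p a ^ (({i, j, k, m} : Finset (Fin l)).card)) := by
  have hset : X i ⁻¹' {a} ∩ X j ⁻¹' {a} ∩ (X k ⁻¹' {a} ∩ X m ⁻¹' {a}) =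
      ⋂ r ∈ ({i, j, k, m} : Finset (Fin l)), X r ⁻¹' {a} := by
    ext ω
    simp only [Set.mem_inter_iff, Set.mem_iInter, Finset.mem_insert, Finset.mem_singleton]
    aesop
  rw [hset, birthday_aux_prod hindep hdist _ (fun _ => a), Finset.prod_const,
    ← ENNReal.ofReal_pow (hp0 a)]

omit [IsProbabilityMeasure (ℙ : Measure Ω)] in
lemma birthday_block_conflict {i j k m : Fin l}
    (hshare : i = k ∨ i = m ∨ j = k ∨ j = m) (a b : Fin n) (hab : a ≠ b) :
    ℙ (X i ⁻¹' {a} ∩ X j ⁻¹' {a} ∩ (X k ⁻¹' {b} ∩ X m ⁻¹' {b})) = 0 := by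
  have hset : X i ⁻¹' {a} ∩ X j ⁻¹' {a} ∩ (X k ⁻¹' {b} ∩ X m ⁻¹' {b}) = (∅ : Set Ω) := by
    ext ω
    simp only [Set.mem_inter_iff, Set.mem_preimage, Set.mem_singleton_iff,
      Set.mem_empty_iff_false, iff_false]
    rintro ⟨⟨h1, h2⟩, h3, h4⟩
    rcases hshare with rfl | rfl | rfl | rfl <;> simp_all
  rw [hset]; exact measure_empty

omit [IsProbabilityMeasure (ℙ : Measure Ω)] in
lemma birthday_block_disj (hindep : iIndepFun X ℙ)
    (hdist : ∀ k i, ℙ {ω | X k ω = i} = ENNReal.ofReal (p i)) (hp0 : ∀ i, 0 ≤ p i)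
    {i j k m : Fin l} (hij : i ≠ j) (hkm : k ≠ m) (hik : i ≠ k) (him : i ≠ m)
    (hjk : j ≠ k) (hjm : j ≠ m) (a b : Fin n) :
    ℙ (X i ⁻¹' {a} ∩ X j ⁻¹' {a} ∩ (X k ⁻¹' {b} ∩ X m ⁻¹' {b})) =
      ENNReal.ofReal (p a ^ 2 * p b ^ 2) := by
  set v : Fin l → Fin n := fun r => if r = k ∨ r = m then b else a with hv
  have vi : v i = a := if_neg (by tauto)
  have vj : v j = a := if_neg (by tauto)
  have vk : v k = b := if_pos (Or.inl rfl)
  have vm : v m = b := if_pos (Or.inr rfl)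
  have hset : X i ⁻¹' {a} ∩ X j ⁻¹' {a} ∩ (X k ⁻¹' {b} ∩ X m ⁻¹' {b}) =
      ⋂ r ∈ ({i, j, k, m} : Finset (Fin l)), X r ⁻¹' {v r} := by
    ext ω
    simp only [Set.mem_inter_iff, Set.mem_iInter, Finset.mem_insert, Finset.mem_singleton,
      Set.mem_preimage, Set.mem_singleton_iff]
    constructor
    · rintro ⟨⟨h1, h2⟩, h3, h4⟩ r hr
      rcases hr with rfl | rfl | rfl | rfl
      · rw [vi]; exact h1
      · rw [vj]; exact h2
      · rw [vk]; exact h3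
      · rw [vm]; exact h4
    · intro h
      refine ⟨⟨?_, ?_⟩, ?_, ?_⟩
      · rw [← vi]; exact h i (by tauto)
      · rw [← vj]; exact h j (by tauto)
      · rw [← vk]; exact h k (by tauto)
      · rw [← vm]; exact h m (by tauto)
  rw [hset, birthday_aux_prod hindep hdist]
  have h1 : ({i, j, k, m} : Finset (Fin l)) = insert i (insert j (insert k {m})) := rfl
  rw [h1, Finset.prod_insert (by simp [hij, hik, him]),
    Finset.prod_insert (by simp [hjk, hjm]), Finset.prod_insert (by simp [hkm]),
    Finset.prod_singleton, vi, vj, vk, vm]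
  have h2 : p a ^ 2 * p b ^ 2 = p a * (p a * (p b * p b)) := by ring
  rw [h2, ENNReal.ofReal_mul (hp0 a), ENNReal.ofReal_mul (hp0 a), ENNReal.ofReal_mul (hp0 b)]

omit [IsProbabilityMeasure (ℙ : Measure Ω)] in
lemma birthday_meas_share (hmeas : ∀ k, Measurable (X k))
    (hindep : iIndepFun X ℙ)
    (hdist : ∀ k i, ℙ {ω | X k ω = i} = ENNReal.ofReal (p i)) (hp0 : ∀ i, 0 ≤ p i)
    {i j k m : Fin l} (hshare : i = k ∨ i = m ∨ j = k ∨ j = m) :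
    ℙ ({ω | X i ω = X j ω} ∩ {ω | X k ω = X m ω}) =
      ENNReal.ofReal (∑ a : Fin n, p a ^ (({i, j, k, m} : Finset (Fin l)).card)) := by
  rw [birthday_meas_AA hmeas, ENNReal.ofReal_sum_of_nonneg (fun a _ => pow_nonneg (hp0 a) _)]
  refine Finset.sum_congr rfl fun a _ => ?_
  rw [Finset.sum_eq_single a]
  · exact birthday_block_const hindep hdist hp0 i j k m a
  · intro b _ hba
    exact birthday_block_conflict hshare a b (Ne.symm hba)
  · intro h; exact absurd (Finset.mem_univ a) h

omit [IsProbabilityMeasure (ℙ : Measure Ω)] in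
lemma birthday_meas_djt (hmeas : ∀ k, Measurable (X k))
    (hindep : iIndepFun X ℙ)
    (hdist : ∀ k i, ℙ {ω | X k ω = i} = ENNReal.ofReal (p i)) (hp0 : ∀ i, 0 ≤ p i)
    {i j k m : Fin l} (hij : i ≠ j) (hkm : k ≠ m) (hik : i ≠ k) (him : i ≠ m)
    (hjk : j ≠ k) (hjm : j ≠ m) :
    ℙ ({ω | X i ω = X j ω} ∩ {ω | X k ω = X m ω}) =
      ENNReal.ofReal ((∑ a : Fin n, p a ^ 2) ^ 2) := by
  rw [birthday_meas_AA hmeas]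
  have h : ∀ a b : Fin n, ℙ (X i ⁻¹' {a} ∩ X j ⁻¹' {a} ∩ (X k ⁻¹' {b} ∩ X m ⁻¹' {b}))
      = ENNReal.ofReal (p a ^ 2) * ENNReal.ofReal (p b ^ 2) := by
    intro a b
    rw [birthday_block_disj hindep hdist hp0 hij hkm hik him hjk hjm,
      ENNReal.ofReal_mul (pow_nonneg (hp0 a) _)]
  simp_rw [h]
  rw [← Finset.sum_mul_sum, sq (∑ a : Fin n, p a ^ 2),
    ENNReal.ofReal_mul (Finset.sum_nonneg fun a _ => pow_nonneg (hp0 a) _),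
    ENNReal.ofReal_sum_of_nonneg (fun a _ => pow_nonneg (hp0 a) _)]

/-- Per-pair covariance bound. -/
lemma birthday_T_bound (hmeas : ∀ k, Measurable (X k))
    (hindep : iIndepFun X ℙ)
    (hdist : ∀ k i, ℙ {ω | X k ω = i} = ENNReal.ofReal (p i)) (hp0 : ∀ i, 0 ≤ p i)
    {r r' : Fin l × Fin l} (hr : r.1 < r.2) (hr' : r'.1 < r'.2) :
    (ℙ ({ω | X r.1 ω = X r.2 ω} ∩ {ω | X r'.1 ω = X r'.2 ω})).toReal
      - (∑ i, p i ^ 2)^2 ≤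
    (if r = r' then (∑ i, p i ^ 2) else 0) +
      (if r ≠ r' ∧ (r.1 = r'.1 ∨ r.1 = r'.2 ∨ r.2 = r'.1 ∨ r.2 = r'.2)
        then (∑ i, p i ^ 3) else 0) := by
  have hs0 : (0:ℝ) ≤ ∑ i, p i ^ 2 := Finset.sum_nonneg fun i _ => pow_nonneg (hp0 i) 2
  by_cases heq : r = r'
  · subst heq
    rw [if_pos rfl, if_neg (by simp)]
    have h1 := birthday_meas_share (p := p) hmeas hindep hdist hp0
      (Or.inl rfl : r.1 = r.1 ∨ r.1 = r.2 ∨ r.2 = r.1 ∨ r.2 = r.2)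
    have h2 : ({r.1, r.2, r.1, r.2} : Finset (Fin l)).card = 2 := by
      have he : ({r.1, r.2, r.1, r.2} : Finset (Fin l)) = {r.1, r.2} := by
        ext x; simp <;> tauto
      rw [he, Finset.card_insert_of_notMem (by simp [hr.ne]), Finset.card_singleton]
    rw [h2] at h1
    rw [h1, ENNReal.toReal_ofReal hs0]
    nlinarith [sq_nonneg (∑ i, p i ^ 2)]
  · by_cases hsh : r.1 = r'.1 ∨ r.1 = r'.2 ∨ r.2 = r'.1 ∨ r.2 = r'.2
    · rw [if_neg heq, if_pos ⟨heq, hsh⟩]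
      have h1 := birthday_meas_share (p := p) hmeas hindep hdist hp0 hsh
      have h2 : ({r.1, r.2, r'.1, r'.2} : Finset (Fin l)).card = 3 :=
        birthday_card3_s13 hr hr' (fun hc => heq (Prod.ext hc.1 hc.2)) hsh
      rw [h2] at h1
      rw [h1, ENNReal.toReal_ofReal (Finset.sum_nonneg fun i _ => pow_nonneg (hp0 i) 3)]
      nlinarith [sq_nonneg (∑ i, p i ^ 2)]
    · rw [if_neg heq, if_neg (by tauto)]
      push_neg at hsh
      obtain ⟨h1, h2, h3, h4⟩ := hsh
      rw [birthday_meas_djt hmeas hindep hdist hp0 hr.ne hr'.ne h1 h2 h3 h4,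
        ENNReal.toReal_ofReal (sq_nonneg _)]
      simp

end BirthdayAux
theorem birthday_success_prob_le_quarter
    {Ω : Type*} [MeasureSpace Ω] [IsProbabilityMeasure (ℙ : Measure Ω)]
    (n l : ℕ) (hn : 1 ≤ n) (hl : 2 ≤ l)
    (δ : ℝ) (hδ0 : 0 < δ) (hδ1 : δ ≤ 1)
    (p : Fin n → ℝ) (hp0 : ∀ i, 0 ≤ p i) (hp1 : ∑ i, p i = 1)
    (X : Fin l → Ω → Fin n) (hmeas : ∀ k, Measurable (X k))
    (hindep : iIndepFun X ℙ)
    (hdist : ∀ k i, ℙ {ω | X k ω = i} = ENNReal.ofReal (p i))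
    (Z : Ω → ℝ)
    (hZ : Z = fun ω => ∑ i : Fin l, ∑ j : Fin l,
      if i < j ∧ X i ω = X j ω then (1 : ℝ) else 0)
    (hEZ : 1 / (∫ ω, Z ω) ≤ δ ^ 2 / 512)
    (hnl : 2 * Real.sqrt n / l ≤ δ ^ 2 / 512)
    (hclose : (n : ℝ) * ∑ i, (p i) ^ 2 ≤ 1 + δ / 4) :
    (ℙ {ω | Z ω > (l.choose 2 : ℝ) * (1 / n) * (1 + δ / 2)}).toReal ≤ 1 / 4 := by
  have hn0 : (0:ℝ) < n := by positivity
  have hn1 : (1:ℝ) ≤ n := by exact_mod_cast hn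
  have hl2 : (2:ℝ) ≤ l := by exact_mod_cast hl
  have hs0 : (0:ℝ) ≤ ∑ i, p i ^ 2 := Finset.sum_nonneg fun i _ => pow_nonneg (hp0 i) 2
  have hq0 : (0:ℝ) ≤ ∑ i, p i ^ 3 := Finset.sum_nonneg fun i _ => pow_nonneg (hp0 i) 3
  -- measurability of the coincidence sets
  have hA_meas : ∀ i j : Fin l, MeasurableSet {ω | X i ω = X j ω} := by
    intro i j
    have he : {ω | X i ω = X j ω} = ⋃ a : Fin n, (X i ⁻¹' {a} ∩ X j ⁻¹' {a}) := by
      ext ω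
      simp only [Set.mem_setOf_eq, Set.mem_iUnion, Set.mem_inter_iff, Set.mem_preimage,
        Set.mem_singleton_iff]
      exact ⟨fun h => ⟨X j ω, h, rfl⟩, fun ⟨a, h1, h2⟩ => h1.trans h2.symm⟩
    rw [he]
    exact MeasurableSet.iUnion fun a => ((hmeas i) (measurableSet_singleton _)).inter
      ((hmeas j) (measurableSet_singleton _))
  set pairsF : Finset (Fin l × Fin l) :=
    (univ : Finset (Fin l × Fin l)).filter (fun r => r.1 < r.2) with hpairsF
  have hcard : pairsF.card = l.choose 2 := birthday_card_pairsF l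
  have hmemP : ∀ r : Fin l × Fin l, r ∈ pairsF ↔ r.1 < r.2 := by
    intro r; rw [hpairsF]; simp
  -- rewriting Z as a sum of indicators
  have Zrw : Z = fun ω => ∑ r ∈ pairsF,
      ({ω' | X r.1 ω' = X r.2 ω'}).indicator (fun _ => (1:ℝ)) ω := by
    rw [hZ]; funext ω
    rw [hpairsF, Finset.sum_filter, Fintype.sum_prod_type]
    refine Finset.sum_congr rfl fun i _ => Finset.sum_congr rfl fun j _ => ?_
    by_cases h1 : i < j <;> by_cases h2 : X i ω = X j ω <;>
      simp [h1, h2, Set.indicator_apply]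
  have indmul : ∀ (S T : Set Ω) (ω : Ω), S.indicator (fun _ => (1:ℝ)) ω *
      T.indicator (fun _ => (1:ℝ)) ω = (S ∩ T).indicator (fun _ => (1:ℝ)) ω := by
    intro S T ω
    by_cases h1 : ω ∈ S <;> by_cases h2 : ω ∈ T <;>
      simp [Set.indicator_apply, h1, h2, Set.mem_inter_iff]
  have hInt : ∀ r : Fin l × Fin l,
      Integrable (({ω' | X r.1 ω' = X r.2 ω'}).indicator (fun _ => (1:ℝ))) ℙ :=
    fun r => (integrable_const 1).indicator (hA_meas _ _)
  -- probability of a single coincidence set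
  have hPA : ∀ r : Fin l × Fin l, r.1 < r.2 →
      ℙ {ω | X r.1 ω = X r.2 ω} = ENNReal.ofReal (∑ i, p i ^ 2) := by
    intro r hr
    have h1 := birthday_meas_share (p := p) hmeas hindep hdist hp0
      (Or.inl rfl : r.1 = r.1 ∨ r.1 = r.2 ∨ r.2 = r.1 ∨ r.2 = r.2)
    have h2 : ({r.1, r.2, r.1, r.2} : Finset (Fin l)).card = 2 := by
      have he : ({r.1, r.2, r.1, r.2} : Finset (Fin l)) = {r.1, r.2} := by
        ext x; simp <;> tauto
      rw [he, Finset.card_insert_of_notMem (by simp [hr.ne]), Finset.card_singleton]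
    rw [Set.inter_self, h2] at h1
    exact h1
  -- expectation of Z
  have hEZ_eq : ∫ ω, Z ω = (pairsF.card : ℝ) * ∑ i, p i ^ 2 := by
    rw [Zrw, integral_finset_sum _ (fun r _ => hInt r)]
    rw [Finset.sum_congr rfl (fun r hr => ?_), Finset.sum_const, nsmul_eq_mul]
    rw [integral_indicator_const (1:ℝ) (hA_meas _ _), smul_eq_mul, mul_one, measureReal_def,
      hPA r ((hmemP r).1 hr), ENNReal.toReal_ofReal hs0]
  -- Z is in L²
  have hMem : MemLp Z 2 ℙ := by
    rw [Zrw]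
    exact memLp_finset_sum _ fun r _ =>
      memLp_indicator_const 2 (hA_meas _ _) 1 (Or.inr (measure_ne_top _ _))
  -- second moment
  have hZ2_eq : ∫ ω, (Z ω)^2 = ∑ r ∈ pairsF, ∑ r' ∈ pairsF,
      (ℙ ({ω | X r.1 ω = X r.2 ω} ∩ {ω | X r'.1 ω = X r'.2 ω})).toReal := by
    have h1 : ∀ ω, (Z ω)^2 = ∑ r ∈ pairsF, ∑ r' ∈ pairsF,
        (({ω' | X r.1 ω' = X r.2 ω'} ∩ {ω' | X r'.1 ω' = X r'.2 ω'}).indicator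
          (fun _ => (1:ℝ)) ω) := by
      intro ω
      rw [Zrw]
      rw [sq, Finset.sum_mul_sum]
      exact Finset.sum_congr rfl fun r _ => Finset.sum_congr rfl fun r' _ => indmul _ _ ω
    simp_rw [h1]
    rw [integral_finset_sum _ (fun r _ => integrable_finset_sum _ (fun r' _ =>
      (integrable_const (1:ℝ)).indicator ((hA_meas _ _).inter (hA_meas _ _))))]
    refine Finset.sum_congr rfl fun r _ => ?_
    rw [integral_finset_sum _ (fun r' _ =>
      (integrable_const (1:ℝ)).indicator ((hA_meas _ _).inter (hA_meas _ _)))]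
    refine Finset.sum_congr rfl fun r' _ => ?_
    rw [integral_indicator_const (1:ℝ) ((hA_meas _ _).inter (hA_meas _ _)), smul_eq_mul,
      mul_one, measureReal_def]
  -- variance bound
  have hVar : variance Z ℙ ≤ (pairsF.card : ℝ) * (∑ i, p i ^ 2)
      + ((l * (l-1) * (l-2) : ℕ) : ℝ) * ∑ i, p i ^ 3 := by
    rw [variance_eq_sub hMem]
    have hpow : (ℙ[Z ^ 2] : ℝ) = ∫ ω, (Z ω)^2 := by
      refine integral_congr_ae (Filter.Eventually.of_forall fun ω => ?_)
      simp [Pi.pow_apply]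
    rw [hpow, hZ2_eq, hEZ_eq]
    have hsq : ((pairsF.card : ℝ) * (∑ i, p i ^ 2))^2
        = ∑ r ∈ pairsF, ∑ r' ∈ pairsF, (∑ i, p i ^ 2)^2 := by
      simp only [Finset.sum_const, nsmul_eq_mul]; ring
    rw [hsq, ← Finset.sum_sub_distrib]
    have hrw : ∀ r ∈ pairsF,
        ((∑ r' ∈ pairsF, (ℙ ({ω | X r.1 ω = X r.2 ω} ∩ {ω | X r'.1 ω = X r'.2 ω})).toReal)
          - ∑ r' ∈ pairsF, (∑ i, p i ^ 2)^2)
        = ∑ r' ∈ pairsF,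
            ((ℙ ({ω | X r.1 ω = X r.2 ω} ∩ {ω | X r'.1 ω = X r'.2 ω})).toReal
              - (∑ i, p i ^ 2)^2) := fun r _ => (Finset.sum_sub_distrib _ _).symm
    rw [Finset.sum_congr rfl hrw]
    have hbd : ∀ r ∈ pairsF, ∀ r' ∈ pairsF,
        (ℙ ({ω | X r.1 ω = X r.2 ω} ∩ {ω | X r'.1 ω = X r'.2 ω})).toReal
          - (∑ i, p i ^ 2)^2
        ≤ (if r = r' then (∑ i, p i ^ 2) else 0) +
          (if r ≠ r' ∧ (r.1 = r'.1 ∨ r.1 = r'.2 ∨ r.2 = r'.1 ∨ r.2 = r'.2)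
            then (∑ i, p i ^ 3) else 0) := by
      intro r hr r' hr'
      exact birthday_T_bound hmeas hindep hdist hp0 ((hmemP r).1 hr) ((hmemP r').1 hr')
    refine le_trans (Finset.sum_le_sum fun r hr =>
      Finset.sum_le_sum fun r' hr' => hbd r hr r' hr') ?_
    rw [Finset.sum_congr rfl (fun r (hr : r ∈ pairsF) => Finset.sum_add_distrib),
      Finset.sum_add_distrib]
    have hfirst : ∑ r ∈ pairsF, ∑ r' ∈ pairsF, (if r = r' then (∑ i, p i ^ 2) else 0)
        = (pairsF.card : ℝ) * ∑ i, p i ^ 2 := by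
      have : ∀ r ∈ pairsF, (∑ r' ∈ pairsF, if r = r' then (∑ i, p i ^ 2) else 0)
          = ∑ i, p i ^ 2 := by
        intro r hr
        rw [Finset.sum_ite_eq pairsF r (fun _ => ∑ i, p i ^ 2), if_pos hr]
      rw [Finset.sum_congr rfl this, Finset.sum_const, nsmul_eq_mul]
    have hsecond : ∑ r ∈ pairsF, ∑ r' ∈ pairsF,
        (if r ≠ r' ∧ (r.1 = r'.1 ∨ r.1 = r'.2 ∨ r.2 = r'.1 ∨ r.2 = r'.2)
          then (∑ i, p i ^ 3) else 0)
        ≤ ((l * (l-1) * (l-2) : ℕ) : ℝ) * ∑ i, p i ^ 3 := by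
      rw [← Finset.sum_product']
      rw [← Finset.sum_filter]
      rw [Finset.sum_const, nsmul_eq_mul]
      have hcardT := birthday_card_T_le l pairsF hpairsF
      exact mul_le_mul_of_nonneg_right (by exact_mod_cast hcardT) hq0
    exact add_le_add (le_of_eq hfirst) hsecond
  -- the q ≤ s √s bound
  have hqs : (∑ i, p i ^ 3) ≤ (∑ i, p i ^ 2) * Real.sqrt (∑ i, p i ^ 2) := by
    have hple : ∀ i, p i ≤ Real.sqrt (∑ i, p i ^ 2) := by
      intro i
      have h1 : p i ^ 2 ≤ ∑ i, p i ^ 2 :=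
        Finset.single_le_sum (fun i _ => pow_nonneg (hp0 i) 2) (Finset.mem_univ i)
      calc p i = Real.sqrt (p i ^ 2) := (Real.sqrt_sq (hp0 i)).symm
        _ ≤ _ := Real.sqrt_le_sqrt h1
    calc (∑ i, p i ^ 3) = ∑ i, p i ^ 2 * p i := by
          refine Finset.sum_congr rfl fun i _ => ?_; ring
      _ ≤ ∑ i, p i ^ 2 * Real.sqrt (∑ i, p i ^ 2) :=
          Finset.sum_le_sum fun i _ =>
            mul_le_mul_of_nonneg_left (hple i) (pow_nonneg (hp0 i) 2)
      _ = (∑ i, p i ^ 2) * Real.sqrt (∑ i, p i ^ 2) := by rw [← Finset.sum_mul]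
  -- 1 ≤ n s
  have hs1 : 1 ≤ (n:ℝ) * ∑ i, p i ^ 2 := by
    have h := sq_sum_le_card_mul_sum_sq (s := (univ : Finset (Fin n))) (f := p)
    rw [hp1, Finset.card_univ, Fintype.card_fin] at h
    simpa using h
  -- choose identity
  have hNl : 2 * ((l.choose 2 : ℕ) : ℝ) = (l:ℝ) * ((l:ℝ) - 1) := by
    have h1 : (l.choose 2) * 2 = l * (l - 1) := by
      rw [Nat.choose_two_right, ← Finset.sum_range_id, Finset.sum_range_id_mul_two]
    have h2 : (((l.choose 2) * 2 : ℕ) : ℝ) = ((l * (l - 1) : ℕ) : ℝ) := by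
      exact_mod_cast h1
    push_cast [Nat.cast_sub (by omega : 1 ≤ l)] at h2
    linarith
  have hN1 : (1:ℝ) ≤ ((l.choose 2 : ℕ) : ℝ) := by nlinarith
  -- Chebyshev constant
  set c : ℝ := ((l.choose 2 : ℕ) : ℝ) * δ / (4 * (n:ℝ)) with hc_def
  have hc0 : 0 < c := by rw [hc_def]; positivity
  -- arithmetic conclusion
  have harith : variance Z ℙ / c^2 ≤ 1/4 := by
    rw [hc_def]
    refine birthday_arith_final (n:ℝ) (l:ℝ) δ (∑ i, p i ^ 2) (∑ i, p i ^ 3)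
      ((l.choose 2 : ℕ) : ℝ) (variance Z ℙ) hn1 hl2 hδ0 hδ1 hs1 (by linarith)
      hq0 hqs hNl ?_ hnl ?_
    · rw [hEZ_eq, hcard] at hEZ
      exact hEZ
    · have hcast : ((l * (l-1) * (l-2) : ℕ) : ℝ) = (l:ℝ) * ((l:ℝ) - 1) * ((l:ℝ) - 2) := by
        push_cast [Nat.cast_sub (by omega : 1 ≤ l), Nat.cast_sub (by omega : 2 ≤ l)]
        ring
      rw [hcard, hcast] at hVar
      exact hVar
  -- deviation set inclusion
  have hEZle : ∫ ω, Z ω ≤ ((l.choose 2 : ℕ) : ℝ) * (1 + δ/4) / n := by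
    rw [hEZ_eq, hcard]
    have hsle : (∑ i, p i ^ 2) ≤ (1 + δ/4) / n := by
      rw [le_div_iff₀ hn0]; linarith
    calc ((l.choose 2 : ℕ) : ℝ) * (∑ i, p i ^ 2)
        ≤ ((l.choose 2 : ℕ) : ℝ) * ((1 + δ/4) / n) :=
          mul_le_mul_of_nonneg_left hsle (by linarith)
      _ = ((l.choose 2 : ℕ) : ℝ) * (1 + δ/4) / n := by ring
  have hsubset : {ω | Z ω > (l.choose 2 : ℝ) * (1 / n) * (1 + δ / 2)}
      ⊆ {ω | c ≤ |Z ω - ∫ ω', Z ω'|} := by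
    intro ω hω
    simp only [Set.mem_setOf_eq] at hω ⊢
    have hkey : (l.choose 2 : ℝ) * (1 / n) * (1 + δ / 2)
        = ((l.choose 2 : ℕ) : ℝ) * (1 + δ/4) / n + c := by
      rw [hc_def]; field_simp; ring
    have : c ≤ Z ω - ∫ ω', Z ω' := by
      rw [hkey] at hω
      linarith
    exact this.trans (le_abs_self _)
  have hcheb := meas_ge_le_variance_div_sq (μ := ℙ) hMem hc0
  calc (ℙ {ω | Z ω > (l.choose 2 : ℝ) * (1 / n) * (1 + δ / 2)}).toReal
      ≤ (ENNReal.ofReal (variance Z ℙ / c^2)).toReal := by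
        refine ENNReal.toReal_mono ENNReal.ofReal_ne_top ?_
        exact le_trans (measure_mono hsubset) hcheb
    _ = variance Z ℙ / c^2 :=
        ENNReal.toReal_ofReal (div_nonneg (variance_nonneg _ _) (sq_nonneg c))
    _ ≤ 1/4 := harith
end
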